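/- arXiv:math/0212329 — 5 statements merged into one kernel-verified Lean document; each statement's English description precedes it below -/
import Mathlib

section
/- Let p be a prime and let X be a compact metric space with dim_{Z/pZ} X ≤ 1 and dim_{Z[1/p]} X ≤ 1. Then dim_{Z/qZ} X ≤ 1 for every prime q, and dim_Q X ≤ 1. -/
open Set Function

open scoped ENNReal

noncomputable section

/-! ### Alexander–Spanier (Čech) cohomology -/

namespace AS

variable (A : Type*) [AddCommGroup A]

/-- Alexander–Spanier `n`-cochains on `X` with coefficients in `A`. -/
abbrev Cochain (X : Type*) (n : ℕ) : Type _ := (Fin (n + 1) → X) → A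

/-- The Alexander–Spanier coboundary operator. -/
def d (X : Type*) (n : ℕ) : Cochain A X n →+ Cochain A X (n + 1) :=
  AddMonoidHom.mk' (fun φ s => ∑ i : Fin (n + 2), ((-1 : ℤ) ^ (i : ℕ)) • φ (s ∘ i.succAbove))
    (fun φ ψ => funext fun s => by
      simp [smul_add, Finset.sum_add_distrib])

/-- An open cover of `X`. -/
def IsOpenCover {X : Type*} [TopologicalSpace X] (U : Set (Set X)) : Prop :=
  (∀ u ∈ U, IsOpen u) ∧ ⋃₀ U = univ

/-- A tuple is `U`-small if it is contained in a single member of `U`. -/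
def Small {X : Type*} (U : Set (Set X)) {k : ℕ} (s : Fin k → X) : Prop :=
  ∃ u ∈ U, ∀ i, s i ∈ u

/-- The subgroup of cochains vanishing on all tuples that are small with respect to
some open cover (i.e. vanishing in a neighbourhood of the diagonal). -/
def locZero (X : Type*) [TopologicalSpace X] (n : ℕ) : AddSubgroup (Cochain A X n) where
  carrier := {φ | ∃ U, IsOpenCover U ∧ ∀ s : Fin (n + 1) → X, Small U s → φ s = 0}
  zero_mem' := ⟨{univ}, ⟨fun u hu => by rw [mem_singleton_iff] at hu; rw [hu]; exact isOpen_univ,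
      by simp⟩, fun s _ => rfl⟩
  add_mem' := by
    rintro φ ψ ⟨U, ⟨hUo, hUc⟩, hφ⟩ ⟨W, ⟨hWo, hWc⟩, hψ⟩
    refine ⟨(fun p : Set X × Set X => p.1 ∩ p.2) '' (U ×ˢ W), ⟨?_, ?_⟩, ?_⟩
    · rintro _ ⟨⟨u, w⟩, ⟨hu, hw⟩, rfl⟩
      exact (hUo u hu).inter (hWo w hw)
    · apply eq_univ_of_forall
      intro x
      have hx1 : x ∈ ⋃₀ U := hUc ▸ mem_univ x
      have hx2 : x ∈ ⋃₀ W := hWc ▸ mem_univ x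
      obtain ⟨u, hu, hxu⟩ := hx1
      obtain ⟨w, hw, hxw⟩ := hx2
      exact ⟨u ∩ w, ⟨⟨u, w⟩, ⟨hu, hw⟩, rfl⟩, hxu, hxw⟩
    · rintro s ⟨_, ⟨⟨u, w⟩, ⟨hu, hw⟩, rfl⟩, hs⟩
      have h1 : φ s = 0 := hφ s ⟨u, hu, fun i => (hs i).1⟩
      have h2 : ψ s = 0 := hψ s ⟨w, hw, fun i => (hs i).2⟩
      show φ s + ψ s = 0
      rw [h1, h2, add_zero]
  neg_mem' := by
    rintro φ ⟨U, hU, hφ⟩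
    exact ⟨U, hU, fun s hs => by show -φ s = 0; rw [hφ s hs, neg_zero]⟩

/-- The Alexander–Spanier cochain complex: cochains modulo locally zero cochains. -/
abbrev QC (X : Type*) [TopologicalSpace X] (n : ℕ) : Type _ := Cochain A X n ⧸ locZero A X n

lemma d_locZero (X : Type*) [TopologicalSpace X] (n : ℕ) :
    locZero A X n ≤ (locZero A X (n + 1)).comap (d A X n) := by
  rintro φ ⟨U, hU, hφ⟩
  refine ⟨U, hU, fun s ⟨u, hu, hs⟩ => ?_⟩
  show (d A X n φ) s = 0
  have : ∀ i : Fin (n + 2), φ (s ∘ i.succAbove) = 0 :=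
    fun i => hφ _ ⟨u, hu, fun j => hs _⟩
  simp only [d, AddMonoidHom.mk'_apply]
  exact Finset.sum_eq_zero fun i _ => by rw [this i, smul_zero]

/-- The induced differential on the Alexander–Spanier complex. -/
def dQ (X : Type*) [TopologicalSpace X] (n : ℕ) : QC A X n →+ QC A X (n + 1) :=
  QuotientAddGroup.map _ _ (d A X n) (d_locZero A X n)

/-- Cocycles. -/
def cocycles (X : Type*) [TopologicalSpace X] (n : ℕ) : AddSubgroup (QC A X n) :=
  (dQ A X n).ker

/-- Coboundaries (the trivial subgroup in degree `0`). -/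
def cobounds (X : Type*) [TopologicalSpace X] (n : ℕ) : AddSubgroup (QC A X n) :=
  match n with
  | 0 => ⊥
  | (m + 1) => (dQ A X m).range

/-- Alexander–Spanier cohomology of `X` with coefficients in `A`; for paracompact Hausdorff
(e.g. metric) spaces this is naturally isomorphic to Čech cohomology. -/
def ASH (n : ℕ) (X : Type*) [TopologicalSpace X] : Type _ :=
  ↥(cocycles A X n) ⧸ ((cobounds A X n).comap (cocycles A X n).subtype)

instance (n : ℕ) (X : Type*) [TopologicalSpace X] : AddCommGroup (ASH A n X) :=
  inferInstanceAs (AddCommGroup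
    (↥(cocycles A X n) ⧸ ((cobounds A X n).comap (cocycles A X n).subtype)))

end AS

namespace AS

variable (A : Type*) [AddCommGroup A]

/-- Pullback of Alexander–Spanier cochains along a map. -/
def pull {X Y : Type*} (f : X → Y) (n : ℕ) : Cochain A Y n →+ Cochain A X n :=
  AddMonoidHom.mk' (fun φ s => φ (f ∘ s)) (fun φ ψ => rfl)

lemma pull_d {X Y : Type*} (f : X → Y) (n : ℕ) (φ : Cochain A Y n) :
    pull A f (n + 1) (d A Y n φ) = d A X n (pull A f n φ) := rfl

lemma pull_locZero {X Y : Type*} [TopologicalSpace X] [TopologicalSpace Y] {f : X → Y}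
    (hf : Continuous f) (n : ℕ) :
    locZero A Y n ≤ (locZero A X n).comap (pull A f n) := by
  rintro φ ⟨U, ⟨hUo, hUc⟩, hφ⟩
  refine ⟨(f ⁻¹' ·) '' U, ⟨?_, ?_⟩, ?_⟩
  · rintro _ ⟨u, hu, rfl⟩
    exact (hUo u hu).preimage hf
  · apply eq_univ_of_forall
    intro x
    have : f x ∈ ⋃₀ U := hUc ▸ mem_univ _
    obtain ⟨u, hu, hx⟩ := this
    exact ⟨f ⁻¹' u, ⟨u, hu, rfl⟩, hx⟩
  · rintro s ⟨_, ⟨u, hu, rfl⟩, hs⟩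
    exact hφ _ ⟨u, hu, fun i => hs i⟩

/-- Pullback on the Alexander–Spanier complex. -/
def pullQ {X Y : Type*} [TopologicalSpace X] [TopologicalSpace Y] {f : X → Y}
    (hf : Continuous f) (n : ℕ) : QC A Y n →+ QC A X n :=
  QuotientAddGroup.map _ _ (pull A f n) (pull_locZero A hf n)

lemma pullQ_d {X Y : Type*} [TopologicalSpace X] [TopologicalSpace Y] {f : X → Y}
    (hf : Continuous f) (n : ℕ) (x : QC A Y n) :
    pullQ A hf (n + 1) (dQ A Y n x) = dQ A X n (pullQ A hf n x) := by
  refine QuotientAddGroup.induction_on x ?_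
  intro φ
  simp only [pullQ, dQ, QuotientAddGroup.map_mk, pull_d]

lemma pullQ_cocycles {X Y : Type*} [TopologicalSpace X] [TopologicalSpace Y] {f : X → Y}
    (hf : Continuous f) (n : ℕ) {x : QC A Y n} (hx : x ∈ cocycles A Y n) :
    pullQ A hf n x ∈ cocycles A X n := by
  have : dQ A Y n x = 0 := hx
  show dQ A X n (pullQ A hf n x) = 0
  rw [← pullQ_d, this, map_zero]

lemma pullQ_cobounds {X Y : Type*} [TopologicalSpace X] [TopologicalSpace Y] {f : X → Y}
    (hf : Continuous f) (n : ℕ) {x : QC A Y n} (hx : x ∈ cobounds A Y n) :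
    pullQ A hf n x ∈ cobounds A X n := by
  match n with
  | 0 =>
    have : x = 0 := hx
    rw [this, map_zero]
    exact (⊥ : AddSubgroup (QC A X 0)).zero_mem
  | (m + 1) =>
    obtain ⟨y, rfl⟩ := hx
    exact ⟨pullQ A hf m y, (pullQ_d A hf m y).symm⟩

/-- The map on cocycles induced by a continuous map. -/
def pullZ {X Y : Type*} [TopologicalSpace X] [TopologicalSpace Y] {f : X → Y}
    (hf : Continuous f) (n : ℕ) : ↥(cocycles A Y n) →+ ↥(cocycles A X n) :=
  AddMonoidHom.codRestrict ((pullQ A hf n).comp (cocycles A Y n).subtype) _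
    (fun x => pullQ_cocycles A hf n x.2)

/-- The homomorphism induced on Alexander–Spanier (Čech) cohomology by a continuous map.
Note the contravariance: a map `f : X → Y` induces `ASHmap : ASH A n Y →+ ASH A n X`. -/
def ASHmap {X Y : Type*} [TopologicalSpace X] [TopologicalSpace Y] {f : X → Y}
    (hf : Continuous f) (n : ℕ) : ASH A n Y →+ ASH A n X :=
  QuotientAddGroup.map _ _ (pullZ A hf n) (by
    rintro ⟨x, hx⟩ hmem
    have : x ∈ cobounds A Y n := hmem
    exact pullQ_cobounds A hf n this)

end AS

namespace AS

variable (A : Type*) [AddCommGroup A]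

/-- Čech cohomology with compact supports: for compact `B` this is the (Alexander–Spanier =
Čech) cohomology of `B` itself, and for noncompact `B` it is that of the one-point
compactification of `B`. -/
def Hc (n : ℕ) (B : Type*) [TopologicalSpace B] : Type _ :=
  open scoped Classical in
  if CompactSpace B then ASH A n B else ASH A n (OnePoint B)

end AS

/-- The cohomological dimension `dim_A X` of a space `X` with respect to an abelian group `A`:
the supremum of the integers `n` for which there is a locally compact subset `B ⊆ X` with
`H^n_c(B; A) ≠ 0`. -/
noncomputable def cohDim (A : Type*) [AddCommGroup A] (X : Type*) [TopologicalSpace X] : ℕ∞ :=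
  sSup {e : ℕ∞ | ∃ n : ℕ, e = (n : ℕ∞) ∧
    ∃ B : Set X, LocallyCompactSpace B ∧ Nontrivial (AS.Hc A n B)}
namespace DW

open AS Finset

variable {Z : Type*}
variable {A B C : Type*} [AddCommGroup A] [AddCommGroup B] [AddCommGroup C]
variable {Y : Type*} [TopologicalSpace Y]

/-- Delete the `i`-th coordinate (ℕ-indexed, clamped). -/
def faceN {k : ℕ} (s : Fin (k + 1) → Z) (i : ℕ) : Fin k → Z :=
  fun a => if (a : ℕ) < i then s ⟨a, by have := a.2; omega⟩ else s ⟨(a : ℕ) + 1, by have := a.2; omega⟩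

lemma comp_succAbove {k : ℕ} (s : Fin (k + 1) → Z) (i : Fin (k + 1)) :
    s ∘ i.succAbove = faceN s (i : ℕ) := by
  funext a
  by_cases h : (a : ℕ) < (i : ℕ)
  · have : a.castSucc < i := by
      rw [Fin.lt_def]; simpa using h
    rw [Function.comp_apply, Fin.succAbove_of_castSucc_lt _ _ this]
    simp only [faceN, if_pos h]
    exact congrArg s (Fin.ext (by simp))
  · have : i ≤ a.castSucc := by
      rw [Fin.le_def]; simp; omega
    rw [Function.comp_apply, Fin.succAbove_of_le_castSucc _ _ this]
    simp only [faceN, if_neg h]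
    exact congrArg s (Fin.ext (by simp))

lemma d_apply {n : ℕ} (φ : Cochain A Y n) (s : Fin (n + 2) → Y) :
    d A Y n φ s = ∑ i ∈ range (n + 2), ((-1 : ℤ) ^ i) • φ (faceN s i) := by
  show (∑ i : Fin (n + 2), ((-1 : ℤ) ^ (i : ℕ)) • φ (s ∘ i.succAbove)) = _
  rw [← Fin.sum_univ_eq_sum_range (fun i => ((-1 : ℤ) ^ i) • φ (faceN s i)) (n + 2)]
  exact Finset.sum_congr rfl fun i _ => by rw [comp_succAbove]

lemma faceN_faceN {k : ℕ} (s : Fin (k + 2) → Z) {i j : ℕ} (hij : i ≤ j) :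
    faceN (faceN s (j + 1)) i = faceN (faceN s i) j := by
  funext a
  have ha := a.2
  simp only [faceN]
  split_ifs <;>
    first
      | rfl
      | (exfalso; omega)
      | (refine congrArg s (Fin.ext ?_) ; simp ; omega)

lemma d_d {n : ℕ} (φ : Cochain A Y n) : d A Y (n + 1) (d A Y n φ) = 0 := by
  funext s
  show d A Y (n + 1) (d A Y n φ) s = 0
  have e1 : d A Y (n + 1) (d A Y n φ) s
      = ∑ p ∈ range (n + 3) ×ˢ range (n + 2),
          ((-1 : ℤ) ^ (p.1 + p.2)) • φ (faceN (faceN s p.1) p.2) := by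
    rw [d_apply, Finset.sum_product]
    refine Finset.sum_congr rfl fun i _ => ?_
    rw [d_apply, smul_sum]
    exact Finset.sum_congr rfl fun j _ => by rw [smul_smul, ← pow_add]
  rw [e1]
  classical
  rw [← Finset.sum_filter_add_sum_filter_not (range (n + 3) ×ˢ range (n + 2))
    (fun p => p.2 < p.1)]
  have e2 : ∑ p ∈ (range (n + 3) ×ˢ range (n + 2)).filter (fun p => ¬ p.2 < p.1),
      ((-1 : ℤ) ^ (p.1 + p.2)) • φ (faceN (faceN s p.1) p.2)
      = ∑ p ∈ (range (n + 3) ×ˢ range (n + 2)).filter (fun p => p.2 < p.1),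
          (- (((-1 : ℤ) ^ (p.1 + p.2)) • φ (faceN (faceN s p.1) p.2))) := by
    refine Finset.sum_nbij' (fun p => (p.2 + 1, p.1)) (fun p => (p.2, p.1 - 1)) ?_ ?_ ?_ ?_ ?_
    · intro p hp; simp only [Finset.mem_filter, Finset.mem_product, Finset.mem_range] at hp ⊢
      omega
    · intro p hp; simp only [Finset.mem_filter, Finset.mem_product, Finset.mem_range] at hp ⊢
      omega
    · intro p hp; simp only [Finset.mem_filter, Finset.mem_product, Finset.mem_range] at hp
      ext <;> simp <;> omega
    · intro p hp; simp only [Finset.mem_filter, Finset.mem_product, Finset.mem_range] at hp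
      ext <;> simp <;> omega
    · intro p hp; simp only [Finset.mem_filter, Finset.mem_product, Finset.mem_range] at hp
      have hff : faceN (faceN s (p.2 + 1)) p.1 = faceN (faceN s p.1) p.2 :=
        faceN_faceN s (by omega)
      rw [hff]
      have : (p.2 + 1) + p.1 = (p.1 + p.2) + 1 := by omega
      rw [this, pow_succ]
      simp [neg_smul]
  rw [e2, Finset.sum_neg_distrib]
  exact add_neg_cancel _

end DW
/-! ### The prism operator -/

namespace DW
open AS Finset
variable {Z : Type*}
variable {A : Type*} [AddCommGroup A]
variable {Y : Type*} [TopologicalSpace Y]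

def mixN (r : Z → Z) {k : ℕ} (t : Fin (k + 1) → Z) (i : ℕ) : Fin (k + 2) → Z :=
  fun a => if h : (a : ℕ) ≤ i ∧ (a : ℕ) ≤ k then t ⟨a, by omega⟩
    else r (t ⟨(a : ℕ) - 1, by have := a.2; omega⟩)

def glueN (r : Z → Z) {k : ℕ} (u : Fin (k + 1) → Z) (c : ℕ) : Fin (k + 1) → Z :=
  fun a => if (a : ℕ) < c then u a else r (u a)

lemma glueN_zero (r : Z → Z) {k : ℕ} (u : Fin (k + 1) → Z) : glueN r u 0 = r ∘ u := by
  funext a; simp [glueN]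

lemma glueN_top (r : Z → Z) {k : ℕ} (u : Fin (k + 1) → Z) {c : ℕ} (hc : k + 1 ≤ c) :
    glueN r u c = u := by
  funext a; have := a.2; simp only [glueN]; rw [if_pos (by omega)]

section tuples
variable (r : Z → Z) {K : ℕ} (u : Fin (K + 2) → Z)

lemma mixN_face_self {i : ℕ} (hi : i ≤ K + 1) :
    faceN (mixN r u i) i = glueN r u i := by
  funext a; have ha := a.2
  simp only [faceN, mixN, glueN]
  split_ifs <;>
    first
      | rfl
      | (exfalso; omega)
      | (refine congrArg u (Fin.ext ?_); simp; omega)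
      | (refine congrArg r (congrArg u (Fin.ext ?_)); simp; omega)

lemma mixN_face_succ {i : ℕ} (hi : i ≤ K + 1) :
    faceN (mixN r u i) (i + 1) = glueN r u (i + 1) := by
  funext a; have ha := a.2
  simp only [faceN, mixN, glueN]
  split_ifs <;>
    first
      | rfl
      | (exfalso; omega)
      | (refine congrArg u (Fin.ext ?_); simp; omega)
      | (refine congrArg r (congrArg u (Fin.ext ?_)); simp; omega)

lemma mixN_face_lo {i b : ℕ} (hb : b < i) (hi : i ≤ K + 1) :
    faceN (mixN r u i) b = mixN r (faceN u b) (i - 1) := by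
  funext a; have ha := a.2
  simp only [faceN, mixN]
  split_ifs <;>
    first
      | rfl
      | (exfalso; omega)
      | (refine congrArg u (Fin.ext ?_); simp; omega)
      | (refine congrArg r (congrArg u (Fin.ext ?_)); simp; omega)

lemma mixN_face_hi {i b : ℕ} (h1 : i + 1 < b) (h2 : b ≤ K + 2) :
    faceN (mixN r u i) b = mixN r (faceN u (b - 1)) i := by
  funext a; have ha := a.2
  simp only [faceN, mixN]
  split_ifs <;>
    first
      | rfl
      | (exfalso; omega)
      | (refine congrArg u (Fin.ext ?_); simp; omega)
      | (refine congrArg r (congrArg u (Fin.ext ?_)); simp; omega)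

end tuples

/-- The prism (chain homotopy) operator. -/
def Pfun (r : Y → Y) (m : ℕ) (φ : Cochain A Y (m + 1)) : Cochain A Y m :=
  fun t => ∑ i ∈ range (m + 1), ((-1 : ℤ) ^ i) • φ (mixN r t i)

lemma prism {n : ℕ} (r : Y → Y) (φ : Cochain A Y (n + 1)) (u : Fin (n + 2) → Y) :
    d A Y n (Pfun r n φ) u + Pfun r (n + 1) (d A Y (n + 1) φ) u = φ (r ∘ u) - φ u := by
  classical
  set g : ℕ → ℕ → A := fun a i => ((-1 : ℤ) ^ (a + i)) • φ (mixN r (faceN u a) i) with hg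
  set h : ℕ → ℕ → A := fun i b => ((-1 : ℤ) ^ (i + b)) • φ (faceN (mixN r u i) b) with hh
  have hdP : d A Y n (Pfun r n φ) u
      = ∑ a ∈ range (n + 2), ∑ i ∈ range (n + 1), g a i := by
    rw [d_apply]
    refine sum_congr rfl fun a _ => ?_
    show ((-1 : ℤ) ^ a) • (∑ i ∈ range (n + 1), ((-1 : ℤ) ^ i) • φ (mixN r (faceN u a) i)) = _
    rw [smul_sum]
    exact sum_congr rfl fun i _ => by rw [← mul_zsmul, ← pow_add]
  have hPd : Pfun r (n + 1) (d A Y (n + 1) φ) u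
      = ∑ i ∈ range (n + 2), ∑ b ∈ range (n + 3), h i b := by
    show (∑ i ∈ range (n + 2), ((-1 : ℤ) ^ i) • (d A Y (n + 1) φ) (mixN r u i)) = _
    refine sum_congr rfl fun i _ => ?_
    rw [d_apply, smul_sum]
    exact sum_congr rfl fun b _ => by rw [← mul_zsmul, ← pow_add]
  have hsplit2 : ∀ i ∈ range (n + 2),
      ∑ b ∈ range (n + 3), h i b
        = (φ (glueN r u i) - φ (glueN r u (i + 1)))
          + (∑ b ∈ Ico 0 i, h i b + ∑ b ∈ Ico (i + 2) (n + 3), h i b) := by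
    intro i hi
    rw [Finset.mem_range] at hi
    have c2 : ∑ b ∈ Ico i (i + 2), h i b + ∑ b ∈ Ico (i + 2) (n + 3), h i b
        = ∑ b ∈ Ico i (n + 3), h i b :=
      Finset.sum_Ico_consecutive _ (by omega) (by omega)
    have c1 : ∑ b ∈ Ico 0 i, h i b + ∑ b ∈ Ico i (n + 3), h i b
        = ∑ b ∈ Ico 0 (n + 3), h i b :=
      Finset.sum_Ico_consecutive _ (by omega) (by omega)
    have cmid : ∑ b ∈ Ico i (i + 2), h i b = φ (glueN r u i) - φ (glueN r u (i + 1)) := by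
      rw [show i + 2 = (i + 1) + 1 from rfl, Finset.sum_Ico_succ_top (by omega),
        Finset.sum_Ico_succ_top (by omega), Finset.Ico_self, Finset.sum_empty, zero_add]
      have t1 : h i i = φ (glueN r u i) := by
        simp only [hh]
        rw [mixN_face_self r u (by omega : i ≤ n + 1),
          Even.neg_one_pow (Even.add_self i), one_zsmul]
      have t2 : h i (i + 1) = - φ (glueN r u (i + 1)) := by
        simp only [hh]
        rw [mixN_face_succ r u (by omega : i ≤ n + 1),
          Odd.neg_one_pow ⟨i, by omega⟩, neg_one_zsmul]
      rw [t1, t2]; abel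
    rw [Finset.range_eq_Ico, ← c1, ← c2, cmid]; abel
  have hPd2 : Pfun r (n + 1) (d A Y (n + 1) φ) u
      = (φ (r ∘ u) - φ u)
        + ((∑ x ∈ (range (n + 2)).sigma (fun i => Ico 0 i), h x.1 x.2)
          + (∑ x ∈ (range (n + 2)).sigma (fun i => Ico (i + 2) (n + 3)), h x.1 x.2)) := by
    rw [hPd, Finset.sum_congr rfl hsplit2, Finset.sum_add_distrib, Finset.sum_add_distrib,
      Finset.sum_range_sub' (fun c => φ (glueN r u c)) (n + 2),
      glueN_zero, glueN_top r u (by omega : n + 2 ≤ n + 2),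
      Finset.sum_sigma' (range (n + 2)) (fun i => Ico 0 i) (fun i b => h i b),
      Finset.sum_sigma' (range (n + 2)) (fun i => Ico (i + 2) (n + 3)) (fun i b => h i b)]
  have hdP3 : d A Y n (Pfun r n φ) u
      = (∑ x ∈ (range (n + 2)).sigma (fun a => Ico 0 a), g x.1 x.2)
        + (∑ x ∈ (range (n + 2)).sigma (fun a => Ico a (n + 1)), g x.1 x.2) := by
    rw [hdP, ← Finset.sum_sigma' (range (n + 2)) (fun a => Ico 0 a) (fun a i => g a i),
      ← Finset.sum_sigma' (range (n + 2)) (fun a => Ico a (n + 1)) (fun a i => g a i),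
      ← Finset.sum_add_distrib]
    refine sum_congr rfl fun a ha => ?_
    rw [Finset.mem_range] at ha
    rw [Finset.range_eq_Ico, Finset.sum_Ico_consecutive _ (by omega) (by omega)]
  have elo : ∑ x ∈ (range (n + 2)).sigma (fun i => Ico 0 i), h x.1 x.2
      = - ∑ x ∈ (range (n + 2)).sigma (fun a => Ico a (n + 1)), g x.1 x.2 := by
    rw [← Finset.sum_neg_distrib]
    refine Finset.sum_nbij' (fun x => ⟨x.2, x.1 - 1⟩) (fun x => ⟨x.2 + 1, x.1⟩) ?_ ?_ ?_ ?_ ?_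
    · rintro ⟨i, b⟩ hx
      simp only [Finset.mem_sigma, Finset.mem_range, Finset.mem_Ico] at hx ⊢
      omega
    · rintro ⟨a, i⟩ hx
      simp only [Finset.mem_sigma, Finset.mem_range, Finset.mem_Ico] at hx ⊢
      omega
    · rintro ⟨i, b⟩ hx
      simp only [Finset.mem_sigma, Finset.mem_range, Finset.mem_Ico] at hx
      show (⟨i - 1 + 1, b⟩ : (_ : ℕ) × ℕ) = ⟨i, b⟩
      rw [show i - 1 + 1 = i by omega]
    · rintro ⟨a, i⟩ hx
      simp only [Finset.mem_sigma, Finset.mem_range, Finset.mem_Ico] at hx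
      show (⟨a, i + 1 - 1⟩ : (_ : ℕ) × ℕ) = ⟨a, i⟩
      rw [show i + 1 - 1 = i by omega]
    · rintro ⟨i, b⟩ hx
      simp only [Finset.mem_sigma, Finset.mem_range, Finset.mem_Ico] at hx
      show h i b = - g b (i - 1)
      simp only [hh, hg]
      rw [mixN_face_lo r u (by omega : b < i) (by omega : i ≤ n + 1)]
      rw [show i + b = (b + (i - 1)) + 1 by omega, pow_succ, mul_neg_one, neg_zsmul]
  have ehi : ∑ x ∈ (range (n + 2)).sigma (fun i => Ico (i + 2) (n + 3)), h x.1 x.2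
      = - ∑ x ∈ (range (n + 2)).sigma (fun a => Ico 0 a), g x.1 x.2 := by
    rw [← Finset.sum_neg_distrib]
    refine Finset.sum_nbij' (fun x => ⟨x.2 - 1, x.1⟩) (fun x => ⟨x.2, x.1 + 1⟩) ?_ ?_ ?_ ?_ ?_
    · rintro ⟨i, b⟩ hx
      simp only [Finset.mem_sigma, Finset.mem_range, Finset.mem_Ico] at hx ⊢
      omega
    · rintro ⟨a, i⟩ hx
      simp only [Finset.mem_sigma, Finset.mem_range, Finset.mem_Ico] at hx ⊢
      omega
    · rintro ⟨i, b⟩ hx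
      simp only [Finset.mem_sigma, Finset.mem_range, Finset.mem_Ico] at hx
      show (⟨i, b - 1 + 1⟩ : (_ : ℕ) × ℕ) = ⟨i, b⟩
      rw [show b - 1 + 1 = b by omega]
    · rintro ⟨a, i⟩ hx
      simp only [Finset.mem_sigma, Finset.mem_range, Finset.mem_Ico] at hx
      show (⟨a + 1 - 1, i⟩ : (_ : ℕ) × ℕ) = ⟨a, i⟩
      rw [show a + 1 - 1 = a by omega]
    · rintro ⟨i, b⟩ hx
      simp only [Finset.mem_sigma, Finset.mem_range, Finset.mem_Ico] at hx
      show h i b = - g (b - 1) i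
      simp only [hh, hg]
      rw [mixN_face_hi r u (by omega : i + 1 < b) (by omega : b ≤ n + 2)]
      rw [show i + b = ((b - 1) + i) + 1 by omega, pow_succ, mul_neg_one, neg_zsmul]
  rw [hdP3, hPd2, elo, ehi]
  abel

end DW
/-! ### Coefficient maps, the vanishing predicate, and the exactness chase -/

namespace DW
open AS Finset
variable {A B C : Type*} [AddCommGroup A] [AddCommGroup B] [AddCommGroup C]
variable {Y : Type*} [TopologicalSpace Y]

def cmap (g : A →+ B) {n : ℕ} (φ : Cochain A Y n) : Cochain B Y n := fun s => g (φ s)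

lemma cmap_d (g : A →+ B) {n : ℕ} (φ : Cochain A Y n) :
    d B Y n (cmap g φ) = cmap g (d A Y n φ) := by
  funext s
  show d B Y n (cmap g φ) s = g (d A Y n φ s)
  rw [d_apply, d_apply, map_sum]
  exact sum_congr rfl fun i _ => (map_zsmul g _ _).symm

lemma cmap_sub (g : A →+ B) {n : ℕ} (φ ψ : Cochain A Y n) :
    cmap g (φ - ψ) = cmap g φ - cmap g ψ := by
  funext s; exact map_sub g _ _

lemma cmap_locZero (g : A →+ B) {n : ℕ} {φ : Cochain A Y n} (h : φ ∈ locZero A Y n) :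
    cmap g φ ∈ locZero B Y n := by
  obtain ⟨U, hU, hv⟩ := h
  exact ⟨U, hU, fun s hs => by show g (φ s) = 0; rw [hv s hs, map_zero]⟩

/-- `Van A Y n` : every Alexander–Spanier `(n+1)`-cocycle is a coboundary, i.e.
`H^{n+1}(Y; A) = 0`. -/
def Van (A : Type*) [AddCommGroup A] (Y : Type*) [TopologicalSpace Y] (n : ℕ) : Prop :=
  ∀ φ : Cochain A Y (n + 1), d A Y (n + 1) φ ∈ locZero A Y (n + 2) →
    ∃ ξ : Cochain A Y n, φ - d A Y n ξ ∈ locZero A Y (n + 1)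

lemma dQ_mk {n : ℕ} (φ : Cochain A Y n) :
    dQ A Y n (QuotientAddGroup.mk φ) = QuotientAddGroup.mk (d A Y n φ) :=
  QuotientAddGroup.map_mk _ _ _ _ _

lemma subsingleton_ASH_iff (n : ℕ) :
    Subsingleton (ASH A (n + 1) Y) ↔ Van A Y n := by
  have hcb : ∀ z : QC A Y (n + 1),
      (z ∈ cobounds A Y (n + 1) ↔ z ∈ (dQ A Y n).range) := fun z => Iff.rfl
  constructor
  · intro hs φ hφ
    have hz : (QuotientAddGroup.mk φ : QC A Y (n + 1)) ∈ cocycles A Y (n + 1) := by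
      show dQ A Y (n + 1) (QuotientAddGroup.mk φ) = 0
      rw [dQ_mk, QuotientAddGroup.eq_zero_iff]
      exact hφ
    have helim : (QuotientAddGroup.mk (⟨_, hz⟩ : cocycles A Y (n + 1)) : ASH A (n + 1) Y)
        = 0 := @Subsingleton.elim _ hs _ _
    have hmem := (QuotientAddGroup.eq_zero_iff _).mp helim
    rw [AddSubgroup.mem_comap] at hmem
    rw [hcb] at hmem
    obtain ⟨w, hw⟩ := hmem
    revert hw
    refine QuotientAddGroup.induction_on w ?_
    intro ξ hw
    rw [dQ_mk] at hw
    have := QuotientAddGroup.eq_iff_sub_mem.mp hw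
    exact ⟨ξ, by simpa [neg_sub] using (locZero A Y (n + 1)).neg_mem this⟩
  · intro hv
    have claim : ∀ z : QC A Y (n + 1), z ∈ cocycles A Y (n + 1) →
        z ∈ cobounds A Y (n + 1) := by
      intro z
      refine QuotientAddGroup.induction_on z ?_
      intro φ hφ
      have hφ' : d A Y (n + 1) φ ∈ locZero A Y (n + 2) := by
        have h0 : dQ A Y (n + 1) (QuotientAddGroup.mk φ) = 0 := hφ
        rw [dQ_mk, QuotientAddGroup.eq_zero_iff] at h0
        exact h0
      obtain ⟨ξ, hξ⟩ := hv φ hφ'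
      rw [hcb]
      refine ⟨QuotientAddGroup.mk ξ, ?_⟩
      rw [dQ_mk, QuotientAddGroup.eq_iff_sub_mem]
      simpa [neg_sub] using (locZero A Y (n + 1)).neg_mem hξ
    constructor
    intro x y
    refine QuotientAddGroup.induction_on x ?_
    intro a
    refine QuotientAddGroup.induction_on y ?_
    intro b
    refine QuotientAddGroup.eq_iff_sub_mem.mpr ?_; rw [AddSubgroup.mem_comap]
    exact claim _ (a - b).2
  
lemma chase {ι : A →+ B} {π : B →+ C} (hι : Function.Injective ι)
    (hπ : Function.Surjective π) (hexact : ∀ b : B, π b = 0 ↔ b ∈ Set.range ι)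
    {k : ℕ} (hB : Van B Y k) (hA : Van A Y (k + 1)) : Van C Y k := by
  classical
  intro φ'' hφ''
  obtain ⟨U, hU, hvU⟩ := hφ''
  choose lift hlift using hπ
  set φ : Cochain B Y (k + 1) := fun s => lift (φ'' s) with hφdef
  have hπφ : cmap π φ = φ'' := funext fun s => hlift _
  have hker : ∀ s : Fin (k + 3) → Y, Small U s → ∃ a : A, ι a = d B Y (k + 1) φ s := by
    intro s hs
    have h0 : π (d B Y (k + 1) φ s) = 0 := by
      have h1 : d C Y (k + 1) (cmap π φ) s = 0 := by rw [hπφ]; exact hvU s hs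
      rw [cmap_d] at h1
      exact h1
    exact (hexact _).mp h0
  set ψ : Cochain A Y (k + 2) :=
    fun s => if h : ∃ a : A, ι a = d B Y (k + 1) φ s then h.choose else 0 with hψdef
  have hψι : ∀ s, Small U s → ι (ψ s) = d B Y (k + 1) φ s := by
    intro s hs
    have h := hker s hs
    simp only [hψdef, dif_pos h]
    exact h.choose_spec
  have hγ : cmap ι ψ - d B Y (k + 1) φ ∈ locZero B Y (k + 2) :=
    ⟨U, hU, fun s hs => by
      show ι (ψ s) - d B Y (k + 1) φ s = 0
      rw [hψι s hs, sub_self]⟩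
  have hdγ : cmap ι (d A Y (k + 2) ψ) ∈ locZero B Y (k + 3) := by
    have h1 := (d_locZero B Y (k + 2)) hγ
    rw [AddSubgroup.mem_comap] at h1
    rw [map_sub, d_d, sub_zero, cmap_d] at h1
    exact h1
  have hdψ : d A Y (k + 2) ψ ∈ locZero A Y (k + 3) := by
    obtain ⟨W, hW, hvW⟩ := hdγ
    exact ⟨W, hW, fun s hs => hι (by rw [map_zero]; exact hvW s hs)⟩
  obtain ⟨χ, hχ⟩ := hA ψ hdψ
  have hφt : d B Y (k + 1) (φ - cmap ι χ) ∈ locZero B Y (k + 2) := by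
    have e : cmap ι (d A Y (k + 1) χ) = d B Y (k + 1) (cmap ι χ) := (cmap_d ι χ).symm
    have h1 : d B Y (k + 1) (φ - cmap ι χ)
        = -(cmap ι ψ - d B Y (k + 1) φ) + cmap ι (ψ - d A Y (k + 1) χ) := by
      rw [map_sub, cmap_sub, e]; abel
    rw [h1]
    exact add_mem (neg_mem hγ) (cmap_locZero ι hχ)
  obtain ⟨ξ, hξ⟩ := hB (φ - cmap ι χ) hφt
  refine ⟨cmap π ξ, ?_⟩
  have e1 : cmap π (cmap ι χ) = (0 : Cochain C Y (k + 1)) :=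
    funext fun s => (hexact (ι (χ s))).mpr ⟨χ s, rfl⟩
  have key : φ'' - d C Y k (cmap π ξ) = cmap π ((φ - cmap ι χ) - d B Y k ξ) := by
    rw [cmap_sub, cmap_sub, e1, hπφ, sub_zero, cmap_d]
  rw [key]
  exact cmap_locZero π hξ

end DW
/-! ### Discretization on compact spaces -/

namespace DW
open AS Finset
variable {A : Type*} [AddCommGroup A]
variable {Y : Type*} [TopologicalSpace Y]

lemma exists_discretization [CompactSpace Y] {U : Set (Set Y)} (hU : IsOpenCover U) :
    ∃ (r : Y → Y) (V : Set (Set Y)), IsOpenCover V ∧ (Set.range r).Finite ∧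
      ∀ v ∈ V, ∃ u ∈ U, v ⊆ u ∧ r '' v ⊆ u := by
  classical
  rcases isEmpty_or_nonempty Y with hY | hY
  · exact ⟨id, U, hU, Set.toFinite _, fun v hv => ⟨v, hv, subset_rfl, by
      rw [Set.image_id]⟩⟩
  obtain ⟨hUo, hUc⟩ := hU
  have hcov : (Set.univ : Set Y) ⊆ ⋃ u : U, (u : Set Y) := by
    intro y _
    have hy : y ∈ ⋃₀ U := hUc ▸ Set.mem_univ y
    obtain ⟨u, hu, hyu⟩ := hy
    exact Set.mem_iUnion.mpr ⟨⟨u, hu⟩, hyu⟩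
  obtain ⟨t, ht⟩ := isCompact_univ.elim_finite_subcover (fun u : U => (u : Set Y))
    (fun u => hUo u u.2) hcov
  set T : Y → Finset U := fun y => t.filter (fun u => y ∈ (u : Set Y)) with hT
  have hTne : ∀ y, (T y).Nonempty := by
    intro y
    have hy : y ∈ ⋃ i ∈ t, (i : Set Y) := ht (Set.mem_univ y)
    rw [Set.mem_iUnion₂] at hy
    obtain ⟨u, hut, hyu⟩ := hy
    exact ⟨u, Finset.mem_filter.mpr ⟨hut, hyu⟩⟩
  set O : Y → Set Y := fun y => ⋂ u ∈ T y, (u : Set Y) with hO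
  have hyO : ∀ y, y ∈ O y :=
    fun y => Set.mem_iInter₂.mpr fun u hu => (Finset.mem_filter.mp hu).2
  have hOopen : ∀ y, IsOpen (O y) :=
    fun y => isOpen_biInter_finset (fun u _ => hUo u u.2)
  set ζ : Finset U → Y := fun S =>
    if h : (⋂ u ∈ S, (u : Set Y)).Nonempty then h.some else hY.some with hζ
  set r : Y → Y := fun y => ζ (T y) with hr
  have hrange : (Set.range r).Finite := by
    refine Set.Finite.subset (Set.Finite.image ζ t.powerset.finite_toSet) ?_
    rintro _ ⟨y, rfl⟩
    exact ⟨T y, by simp only [Finset.coe_powerset, Set.mem_preimage, Set.mem_powerset_iff,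
      Finset.coe_subset]; exact Finset.filter_subset _ _, rfl⟩
  refine ⟨r, Set.range O, ⟨?_, ?_⟩, hrange, ?_⟩
  · rintro _ ⟨y, rfl⟩; exact hOopen y
  · exact Set.eq_univ_of_forall fun y => ⟨O y, ⟨y, rfl⟩, hyO y⟩
  · rintro _ ⟨y, rfl⟩
    obtain ⟨u0, hu0⟩ := hTne y
    refine ⟨u0, u0.2, fun z hz => Set.mem_iInter₂.mp hz u0 hu0, ?_⟩
    rintro _ ⟨z, hz, rfl⟩
    have hTzy : T y ⊆ T z := by
      intro u hu
      refine Finset.mem_filter.mpr ⟨(Finset.mem_filter.mp hu).1, ?_⟩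
      exact Set.mem_iInter₂.mp hz u hu
    have hne : (⋂ u ∈ T z, (u : Set Y)).Nonempty :=
      ⟨z, Set.mem_iInter₂.mpr fun u hu => (Finset.mem_filter.mp hu).2⟩
    have hrz : r z ∈ ⋂ u ∈ T z, (u : Set Y) := by
      show ζ (T z) ∈ _
      rw [hζ]
      simp only [dif_pos hne]
      exact hne.some_mem
    exact Set.mem_iInter₂.mp hrz u0 (hTzy hu0)

/-- On a compact space, `H^{k+1}(Y;ℚ) = 0` follows from `H^{k+1}(Y;B) = 0` whenever `B`
admits "division by `N`" factorizations of the inclusion `ℤ → ℚ`. -/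
lemma rat_vanish [CompactSpace Y] {k : ℕ} {B : Type*} [AddCommGroup B]
    (hmaps : ∀ N : ℕ, 0 < N → ∃ (e : ℤ →+ B) (f : B →+ ℚ), ∀ z : ℤ, f (e z) = (z : ℚ) / N)
    (hB : Van B Y k) : Van ℚ Y k := by
  classical
  intro φ hφ
  obtain ⟨U, hU, hvU⟩ := hφ
  obtain ⟨r, V, hV, hrfin, hVU⟩ := exists_discretization hU
  set φ' : Cochain ℚ Y (k + 1) := pull ℚ r (k + 1) φ with hφ'
  have hpifin : ({w : Fin (k + 2) → Y | ∀ a, w a ∈ Set.range r}).Finite := by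
    have he : {w : Fin (k + 2) → Y | ∀ a, w a ∈ Set.range r}
        = Set.pi Set.univ (fun _ => Set.range r) := by
      ext w; simp [Set.mem_pi]
    rw [he]
    exact Set.Finite.pi fun _ => hrfin
  have hSfin : (φ '' {w | ∀ a, w a ∈ Set.range r}).Finite := hpifin.image φ
  set N : ℕ := ∏ x ∈ hSfin.toFinset, x.den with hN
  have hNpos : 0 < N := Finset.prod_pos fun x _ => x.pos
  have hmem : ∀ s : Fin (k + 2) → Y, φ' s ∈ φ '' {w | ∀ a, w a ∈ Set.range r} :=
    fun s => ⟨r ∘ s, fun a => ⟨s a, rfl⟩, rfl⟩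
  have hint : ∀ s : Fin (k + 2) → Y, ∃ z : ℤ, (z : ℚ) = N * φ' s := by
    intro s
    obtain ⟨c, hc⟩ : (φ' s).den ∣ N :=
      Finset.dvd_prod_of_mem (fun x => x.den) (hSfin.mem_toFinset.mpr (hmem s))
    refine ⟨(c : ℤ) * (φ' s).num, ?_⟩
    have hnum : ((φ' s).num : ℚ) = φ' s * ((φ' s).den : ℚ) := (Rat.mul_den_eq_num _).symm
    push_cast
    rw [hnum, hc]
    push_cast
    ring
  choose ζ hζ using hint
  obtain ⟨e, f, hef⟩ := hmaps N hNpos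
  set ψ : Cochain B Y (k + 1) := cmap e ζ with hψ
  have hdφ' : ∀ s : Fin (k + 3) → Y, Small V s → d ℚ Y (k + 1) φ' s = 0 := by
    intro s hs
    obtain ⟨v, hv, hsv⟩ := hs
    obtain ⟨u, hu, hvu, hruv⟩ := hVU v hv
    calc d ℚ Y (k + 1) φ' s = pull ℚ r (k + 2) (d ℚ Y (k + 1) φ) s := by
          rw [hφ', ← pull_d]
      _ = d ℚ Y (k + 1) φ (r ∘ s) := rfl
      _ = 0 := hvU _ ⟨u, hu, fun a => hruv ⟨s a, hsv a, rfl⟩⟩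
  have hdζ : ∀ s : Fin (k + 3) → Y, Small V s → d ℤ Y (k + 1) ζ s = 0 := by
    intro s hs
    have e2 : cmap (Int.castAddHom ℚ) ζ = (N : ℤ) • φ' := by
      funext s'
      show ((ζ s' : ℤ) : ℚ) = (N : ℤ) • φ' s'
      rw [hζ s', zsmul_eq_mul]
      push_cast
      ring
    have hcast : ((d ℤ Y (k + 1) ζ s : ℤ) : ℚ) = (N : ℤ) • (d ℚ Y (k + 1) φ' s) := by
      calc ((d ℤ Y (k + 1) ζ s : ℤ) : ℚ)
          = cmap (Int.castAddHom ℚ) (d ℤ Y (k + 1) ζ) s := rfl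
        _ = d ℚ Y (k + 1) (cmap (Int.castAddHom ℚ) ζ) s := by rw [cmap_d]
        _ = d ℚ Y (k + 1) ((N : ℤ) • φ') s := by rw [e2]
        _ = ((N : ℤ) • d ℚ Y (k + 1) φ') s := by rw [map_zsmul]
        _ = (N : ℤ) • (d ℚ Y (k + 1) φ' s) := rfl
    have h0 : ((d ℤ Y (k + 1) ζ s : ℤ) : ℚ) = 0 := by
      rw [hcast, hdφ' s hs, smul_zero]
    exact_mod_cast h0
  have hdψ : d B Y (k + 1) ψ ∈ locZero B Y (k + 2) := by
    refine ⟨V, hV, fun s hs => ?_⟩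
    have h1 : d B Y (k + 1) (cmap e ζ) s = e (d ℤ Y (k + 1) ζ s) := by rw [cmap_d]; rfl
    rw [hψ, h1, hdζ s hs, map_zero]
  obtain ⟨χ, hχ⟩ := hB ψ hdψ
  have hfψ : cmap f ψ = φ' := by
    funext s
    show f (e (ζ s)) = φ' s
    rw [hef, hζ s]
    field_simp
  have hPd : (Pfun r (k + 1) (d ℚ Y (k + 1) φ) : Cochain ℚ Y (k + 1)) ∈ locZero ℚ Y (k + 1) := by
    refine ⟨V, hV, fun t ht => ?_⟩
    obtain ⟨v, hv, htv⟩ := ht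
    obtain ⟨u, hu, hvu, hruv⟩ := hVU v hv
    show (∑ i ∈ range (k + 2), ((-1 : ℤ) ^ i) • (d ℚ Y (k + 1) φ) (mixN r t i)) = 0
    refine Finset.sum_eq_zero fun i _ => ?_
    have hsmall : Small U (mixN r t i) := by
      refine ⟨u, hu, fun a => ?_⟩
      simp only [mixN]
      split_ifs
      · exact hvu (htv _)
      · exact hruv ⟨_, htv _, rfl⟩
    rw [hvU _ hsmall, smul_zero]
  refine ⟨cmap f χ - Pfun r k φ, ?_⟩
  have key : φ - d ℚ Y k (cmap f χ - Pfun r k φ)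
      = cmap f (ψ - d B Y k χ) - Pfun r (k + 1) (d ℚ Y (k + 1) φ) := by
    funext t
    have h1 := prism r φ t
    have hrt : φ' t = φ (r ∘ t) := rfl
    have h2 : d ℚ Y k (cmap f χ - Pfun r k φ) t
        = d ℚ Y k (cmap f χ) t - d ℚ Y k (Pfun r k φ) t := by
      rw [map_sub]; rfl
    have h3 : d ℚ Y k (cmap f χ) t = f (d B Y k χ t) := by
      rw [cmap_d]; rfl
    have h4 : cmap f (ψ - d B Y k χ) t = φ' t - f (d B Y k χ t) := by
      show f (ψ t - d B Y k χ t) = _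
      rw [map_sub]
      congr 1
      exact congrFun hfψ t
    show φ t - d ℚ Y k (cmap f χ - Pfun r k φ) t
        = cmap f (ψ - d B Y k χ) t - Pfun r (k + 1) (d ℚ Y (k + 1) φ) t
    rw [h2, h3, h4, hrt] at *
    linarith [h1]
  rw [key]
  exact sub_mem (cmap_locZero f hχ) hPd

end DW
/-! ### Arithmetic of `ℤ[1/p]` -/

namespace DW
open AS

section alg
variable (p : ℕ)

lemma powers_le_nzd (hp : p.Prime) : Submonoid.powers ((p : ℕ) : ℤ) ≤ nonZeroDivisors ℤ := by
  rintro v hv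
  obtain ⟨m, rfl⟩ := (Submonoid.mem_powers_iff _ _).mp hv
  exact mem_nonZeroDivisors_of_ne_zero (pow_ne_zero _ (by exact_mod_cast hp.ne_zero))

lemma algebraMap_inj (hp : p.Prime) :
    Function.Injective (algebraMap ℤ (Localization.Away (p : ℤ))) :=
  IsLocalization.injective _ (powers_le_nzd p hp)

lemma isDomainJ (hp : p.Prime) : IsDomain (Localization.Away (p : ℤ)) :=
  IsLocalization.isDomain_localization (powers_le_nzd p hp)

lemma punit (hp : p.Prime) (q : ℕ) (hq : q.Prime) (hne : q ≠ p) [Fact q.Prime] :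
    ∀ y : Submonoid.powers ((p : ℕ) : ℤ), IsUnit ((Int.castRingHom (ZMod q)) (y : ℤ)) := by
  rintro ⟨v, hv⟩
  obtain ⟨m, rfl⟩ := (Submonoid.mem_powers_iff _ _).mp hv
  simp only [map_pow]
  refine IsUnit.pow m (isUnit_iff_ne_zero.mpr ?_)
  show ((p : ℤ) : ZMod q) ≠ 0
  have hcast : ((p : ℤ) : ZMod q) = ((p : ℕ) : ZMod q) := by push_cast; ring
  rw [hcast, Ne, ZMod.natCast_eq_zero_iff]
  intro hdvd
  exact hne ((Nat.prime_dvd_prime_iff_eq hq hp).mp hdvd)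

lemma zmod_data (hp : p.Prime) (q : ℕ) (hq : q.Prime) (hne : q ≠ p) :
    ∃ (ι : Localization.Away (p : ℤ) →+ Localization.Away (p : ℤ))
      (π : Localization.Away (p : ℤ) →+ ZMod q),
      Function.Injective ι ∧ Function.Surjective π ∧
      ∀ b, π b = 0 ↔ b ∈ Set.range ι := by
  haveI : Fact q.Prime := ⟨hq⟩
  haveI : IsDomain (Localization.Away (p : ℤ)) := isDomainJ p hp
  have hqR : ((q : ℕ) : Localization.Away (p : ℤ)) ≠ 0 := by
    have e1 : ((q : ℕ) : Localization.Away (p : ℤ))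
        = algebraMap ℤ (Localization.Away (p : ℤ)) ((q : ℕ) : ℤ) := (map_natCast _ q).symm
    rw [e1]
    intro h0
    have h1 : ((q : ℕ) : ℤ) = 0 := algebraMap_inj p hp (h0.trans (map_zero _).symm)
    exact hq.ne_zero (by exact_mod_cast h1)
  refine ⟨AddMonoidHom.mulLeft ((q : ℕ) : Localization.Away (p : ℤ)),
    (IsLocalization.lift (punit p hp q hq hne)).toAddMonoidHom, ?_, ?_, ?_⟩
  · intro a b h
    exact mul_left_cancel₀ hqR h
  · intro z
    obtain ⟨a, rfl⟩ := ZMod.intCast_surjective z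
    exact ⟨algebraMap ℤ _ a, IsLocalization.lift_eq _ a⟩
  · intro b
    constructor
    · intro h0
      obtain ⟨⟨a, s⟩, rfl⟩ := IsLocalization.mk'_surjective (Submonoid.powers ((p : ℕ) : ℤ)) b
      have ha : ((a : ℤ) : ZMod q) = 0 := by
        have h1 := (IsLocalization.lift_mk'_spec (punit p hp q hq hne) a 0 s).mp h0
        simpa using h1
      obtain ⟨c, hc⟩ := (ZMod.intCast_zmod_eq_zero_iff_dvd a q).mp ha
      refine ⟨IsLocalization.mk' (Localization.Away (p : ℤ)) c s, ?_⟩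
      show ((q : ℕ) : Localization.Away (p : ℤ)) * _ = _
      rw [show ((q : ℕ) : Localization.Away (p : ℤ))
          = algebraMap ℤ (Localization.Away (p : ℤ)) ((q : ℕ) : ℤ) from (map_natCast _ q).symm,
        IsLocalization.mk'_eq_mul_mk'_one c s, ← mul_assoc, ← map_mul,
        ← IsLocalization.mk'_eq_mul_mk'_one, ← hc]
    · rintro ⟨y, rfl⟩
      show (IsLocalization.lift (punit p hp q hq hne))
        (((q : ℕ) : Localization.Away (p : ℤ)) * y) = 0
      rw [map_mul, map_natCast _ q, ZMod.natCast_self, zero_mul]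

set_option maxHeartbeats 1000000 in
lemma rat_maps (hp : p.Prime) :
    ∀ N : ℕ, 0 < N → ∃ (e : ℤ →+ Localization.Away (p : ℤ))
      (f : Localization.Away (p : ℤ) →+ ℚ), ∀ z : ℤ, f (e z) = (z : ℚ) / N := by
  intro N _
  have hunit : ∀ y : Submonoid.powers ((p : ℕ) : ℤ), IsUnit ((Int.castRingHom ℚ) (y : ℤ)) := by
    rintro ⟨v, hv⟩
    obtain ⟨m, rfl⟩ := (Submonoid.mem_powers_iff _ _).mp hv
    simp only [map_pow]
    refine IsUnit.pow m (isUnit_iff_ne_zero.mpr ?_)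
    show ((p : ℤ) : ℚ) ≠ 0
    exact_mod_cast hp.ne_zero
  set jm : Localization.Away (p : ℤ) →+* ℚ := IsLocalization.lift hunit with hjm
  refine ⟨(algebraMap ℤ (Localization.Away (p : ℤ))).toAddMonoidHom,
    AddMonoidHom.mk' (fun x => jm x / N)
      (fun x y => by show jm (x + y) / N = jm x / N + jm y / N
                     rw [map_add, add_div]), fun z => ?_⟩
  show jm (algebraMap ℤ _ z) / N = (z : ℚ) / N
  rw [hjm, IsLocalization.lift_eq]
  norm_num

end alg
end DW
/-! ### Assembly -/

namespace DW
open AS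

lemma Hc_eq_of_compact (A : Type*) [AddCommGroup A] (n : ℕ) (Z : Type*) [TopologicalSpace Z]
    (h : CompactSpace Z) : AS.Hc A n Z = ASH A n Z := by
  unfold AS.Hc
  exact if_pos h

lemma Hc_eq_of_noncompact (A : Type*) [AddCommGroup A] (n : ℕ) (Z : Type*) [TopologicalSpace Z]
    (h : ¬ CompactSpace Z) : AS.Hc A n Z = ASH A n (OnePoint Z) := by
  unfold AS.Hc
  exact if_neg h

end DW

/-- **Lemma 13** (Dranishnikov–West).  If `dim_{ℤ/pℤ} X ≤ 1` and `dim_{ℤ[1/p]} X ≤ 1` for a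
compact metric space `X`, then `dim_{ℤ/qℤ} X ≤ 1` for all primes `q` and `dim_ℚ X ≤ 1`. -/
theorem cohDim_le_one_of_mod_p_and_away_p (p : ℕ) (hp : p.Prime)
    (X : Type) [MetricSpace X] [CompactSpace X]
    (h1 : cohDim (ZMod p) X ≤ 1)
    (h2 : cohDim (Localization.Away (p : ℤ)) X ≤ 1) :
    (∀ q : ℕ, q.Prime → cohDim (ZMod q) X ≤ 1) ∧ cohDim ℚ X ≤ 1 := by
  have main : ∀ (A : Type) [AddCommGroup A],
      (∀ (Z : Type) [TopologicalSpace Z] [CompactSpace Z],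
        (∀ m : ℕ, 1 ≤ m → DW.Van (Localization.Away (p : ℤ)) Z m) →
        ∀ k : ℕ, DW.Van A Z (k + 1)) →
      cohDim A X ≤ 1 := by
    intro A _ transfer
    refine sSup_le ?_
    rintro e ⟨n, rfl, B, hB, hnt⟩
    by_contra hgt
    have hn2 : 2 ≤ n := by
      by_contra hn
      exact hgt (by exact_mod_cast (show n ≤ 1 by omega))
    obtain ⟨k, rfl⟩ : ∃ k, n = (k + 1) + 1 := ⟨n - 2, by omega⟩
    have hJsub : ∀ m : ℕ, 2 ≤ m →
        Subsingleton (AS.Hc (Localization.Away (p : ℤ)) m B) := by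
      intro m hm
      rw [← not_nontrivial_iff_subsingleton]
      intro hnt'
      have hmem : ((m : ℕ∞)) ∈ {e : ℕ∞ | ∃ n : ℕ, e = (n : ℕ∞) ∧
          ∃ B : Set X, LocallyCompactSpace B ∧
            Nontrivial (AS.Hc (Localization.Away (p : ℤ)) n B)} :=
        ⟨m, rfl, B, hB, hnt'⟩
      have hle : ((m : ℕ∞)) ≤ 1 := le_trans (le_sSup hmem) h2
      have hm1 : m ≤ 1 := by exact_mod_cast hle
      omega
    by_cases hcpt : CompactSpace B
    · have hJvan : ∀ m : ℕ, 1 ≤ m → DW.Van (Localization.Away (p : ℤ)) B m := by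
        intro m _
        have hsub := hJsub (m + 1) (by omega)
        rw [DW.Hc_eq_of_compact _ _ _ hcpt] at hsub
        exact (DW.subsingleton_ASH_iff m).mp hsub
      haveI := hcpt
      have hvan := transfer ↥B hJvan k
      have hsub : Subsingleton (AS.ASH A (k + 1 + 1) ↥B) :=
        (DW.subsingleton_ASH_iff (k + 1)).mpr hvan
      rw [← DW.Hc_eq_of_compact A (k + 1 + 1) ↥B hcpt] at hsub
      exact (not_nontrivial_iff_subsingleton.mpr hsub) hnt
    · have hJvan : ∀ m : ℕ, 1 ≤ m →
          DW.Van (Localization.Away (p : ℤ)) (OnePoint ↥B) m := by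
        intro m _
        have hsub := hJsub (m + 1) (by omega)
        rw [DW.Hc_eq_of_noncompact _ _ _ hcpt] at hsub
        exact (DW.subsingleton_ASH_iff m).mp hsub
      have hvan := transfer (OnePoint ↥B) hJvan k
      have hsub : Subsingleton (AS.ASH A (k + 1 + 1) (OnePoint ↥B)) :=
        (DW.subsingleton_ASH_iff (k + 1)).mpr hvan
      rw [← DW.Hc_eq_of_noncompact A (k + 1 + 1) ↥B hcpt] at hsub
      exact (not_nontrivial_iff_subsingleton.mpr hsub) hnt
  constructor
  · intro q hq
    by_cases hqp : q = p
    · subst hqp; exact h1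
    · refine main (ZMod q) ?_
      intro Z _ _ hJ k
      obtain ⟨ι, π, hι, hπ, hex⟩ := DW.zmod_data p hp q hq hqp
      exact DW.chase hι hπ hex (hJ (k + 1) (by omega)) (hJ (k + 2) (by omega))
  · refine main ℚ ?_
    intro Z _ _ hJ k
    exact DW.rat_vanish (DW.rat_maps p hp) (hJ (k + 1) (by omega))
end
end

section
/- Let p be a prime and let L be a finite connected simplicial complex on which a discrete group G acts simplicially. Then there exists a regular covering map q: M → L with deck transformation group (Z/pZ)^l (where l is the rank of H_1(L;Z/pZ)) such that: (1) the induced homomorphism q*: H^1(L;Z/pZ) → H^1(M;Z/pZ) is zero; and (2) if the fixed point set L^G is nonempty and the induced action of G on H_1(L;Z/pZ) is trivial, then the G-action lifts to an action on M that commutes with the deck transformations. -/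
open Set Function

open scoped ENNReal

noncomputable section

/-! ### Finite simplicial complexes and their geometric realizations -/

/-- An abstract simplicial complex on a finite vertex set `V`. -/
structure FinSimpComplex (V : Type*) [Fintype V] [DecidableEq V] where
  faces : Finset (Finset V)
  nonempty_of_mem : ∀ s ∈ faces, s.Nonempty
  down_closed : ∀ s ∈ faces, ∀ t, t ⊆ s → t.Nonempty → t ∈ faces

namespace FinSimpComplex

variable {V : Type*} [Fintype V] [DecidableEq V] (K : FinSimpComplex V)

/-- The geometric realization `|K|` of `K`, as a subspace of `ℝ^V`
(barycentric coordinates). -/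
def space : Set (V → ℝ) :=
  {w | (∀ v, 0 ≤ w v) ∧ (∑ v, w v) = 1 ∧ ∃ s ∈ K.faces, ∀ v, w v ≠ 0 → v ∈ s}

/-- The closed geometric simplex of `σ` inside `|K|`. -/
def geomSimplex (σ : Finset V) : Set ↥K.space := {x | ∀ v, x.val v ≠ 0 → v ∈ σ}

/-- The geometric boundary `∂σ` of the simplex `σ` inside `|K|`:
points of the simplex supported in a proper face. -/
def geomBoundary (σ : Finset V) : Set ↥K.space :=
  {x | (∀ v, x.val v ≠ 0 → v ∈ σ) ∧ ∃ v ∈ σ, x.val v = 0}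

lemma geomBoundary_subset (σ : Finset V) : K.geomBoundary σ ⊆ K.geomSimplex σ :=
  fun _ hx => hx.1

lemma perm_mem {e : V ≃ V} (he : ∀ s ∈ K.faces, s.image e ∈ K.faces) {w : V → ℝ}
    (hw : w ∈ K.space) : (fun v => w (e.symm v)) ∈ K.space := by
  obtain ⟨hnn, hsum, s, hs, hsupp⟩ := hw
  refine ⟨fun v => hnn _, ?_, s.image e, he s hs, ?_⟩
  · rw [← hsum]
    exact Fintype.sum_equiv e.symm _ _ (fun v => rfl)
  · intro v hv
    exact Finset.mem_image.mpr ⟨e.symm v, hsupp _ hv, e.apply_symm_apply v⟩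

/-- The simplicial homeomorphism of `|K|` induced by a face-preserving permutation of the
vertices. -/
def permAct {e : V ≃ V} (he : ∀ s ∈ K.faces, s.image e ∈ K.faces) :
    ↥K.space → ↥K.space :=
  fun x => ⟨fun v => x.val (e.symm v), K.perm_mem he x.2⟩

lemma permAct_continuous {e : V ≃ V} (he : ∀ s ∈ K.faces, s.image e ∈ K.faces) :
    Continuous (K.permAct he) := by
  apply Continuous.subtype_mk
  exact continuous_pi fun v => (continuous_apply (e.symm v)).comp continuous_subtype_val

/-- The action of a group element on `|K|`, for a simplicial action of `G` on the vertices. -/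
def gAct {G : Type*} [Group G] [MulAction G V]
    (hsimp : ∀ g : G, ∀ s ∈ K.faces, s.image (g • ·) ∈ K.faces) (g : G) :
    ↥K.space → ↥K.space :=
  K.permAct (e := MulAction.toPerm g) (by
    intro s hs
    have := hsimp g s hs
    simpa [MulAction.toPerm] using this)

lemma gAct_continuous {G : Type*} [Group G] [MulAction G V]
    (hsimp : ∀ g : G, ∀ s ∈ K.faces, s.image (g • ·) ∈ K.faces) (g : G) :
    Continuous (K.gAct hsimp g) :=
  K.permAct_continuous _

end FinSimpComplex

/-! ### Auxiliary: explicit covering space built from a system of 1-cocycles -/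

namespace DW

open TopologicalSpace

variable {X A : Type} [TopologicalSpace X] [AddCommGroup A]

/-- The underlying type of the covering space associated to `Φ : X → X → A` and a
cover `W` (phantom parameters so that the topology can be an instance). -/
structure Cov (Φ : X → X → A) (W : Set (Set X)) : Type where
  pt : X
  fib : A

variable (Φ : X → X → A) (W : Set (Set X))

/-- `Φ` is an `A`-valued cocycle relative to the open cover `W`. -/
def Good : Prop :=
  (∀ u ∈ W, IsOpen u) ∧ (⋃₀ W = Set.univ) ∧
    ∀ w ∈ W, ∀ x ∈ w, ∀ y ∈ w, ∀ z ∈ w, Φ x y + Φ y z = Φ x z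

/-- Basic open sets of the covering space. -/
def basV (u : Set X) (x : X) (t : A) : Set (Cov Φ W) :=
  {m | m.pt ∈ u ∧ m.fib = t + Φ x m.pt}

/-- The basis of the covering-space topology. -/
def bas : Set (Set (Cov Φ W)) :=
  {s | ∃ u x t, (IsOpen u ∧ (∃ w ∈ W, u ⊆ w) ∧ x ∈ u) ∧ s = basV Φ W u x t}

instance : TopologicalSpace (Cov Φ W) := .generateFrom (bas Φ W)

variable {Φ W}

lemma Cov.ext' {m n : Cov Φ W} (h1 : m.pt = n.pt) (h2 : m.fib = n.fib) : m = n := by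
  cases m; cases n; cases h1; cases h2; rfl

namespace Good

variable (hG : Good Φ W)
include hG

lemma exists_mem (x : X) : ∃ w ∈ W, x ∈ w := by
  have hx : x ∈ ⋃₀ W := hG.2.1.symm ▸ Set.mem_univ x
  exact hx

lemma cocyc {w : Set X} (hw : w ∈ W) {x y z : X} (hx : x ∈ w) (hy : y ∈ w) (hz : z ∈ w) :
    Φ x y + Φ y z = Φ x z := hG.2.2 w hw x hx y hy z hz

lemma self (x : X) : Φ x x = 0 := by
  obtain ⟨w, hw, hx⟩ := hG.exists_mem x
  exact add_eq_left.mp (hG.cocyc hw hx hx hx)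

lemma mem_basV_self (m : Cov Φ W) {u : Set X} (hm : m.pt ∈ u) :
    m ∈ basV Φ W u m.pt m.fib :=
  ⟨hm, by rw [hG.self, add_zero]⟩

lemma isBasis : IsTopologicalBasis (bas Φ W) := by
  refine ⟨?_, ?_, rfl⟩
  · rintro s1 ⟨u1, x1, t1, ⟨hu1, ⟨w1, hw1, huw1⟩, hx1⟩, rfl⟩
      s2 ⟨u2, x2, t2, ⟨hu2, ⟨w2, hw2, huw2⟩, hx2⟩, rfl⟩ m ⟨hm1, hm2⟩
    refine ⟨basV Φ W (u1 ∩ u2) m.pt m.fib,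
      ⟨u1 ∩ u2, m.pt, m.fib,
        ⟨hu1.inter hu2, ⟨w1, hw1, Set.inter_subset_left.trans huw1⟩, ⟨hm1.1, hm2.1⟩⟩, rfl⟩,
      hG.mem_basV_self m ⟨hm1.1, hm2.1⟩, ?_⟩
    rintro n ⟨⟨hn1, hn2⟩, hfib⟩
    constructor
    · exact ⟨hn1, by
        rw [hfib, hm1.2, add_assoc, hG.cocyc hw1 (huw1 hx1) (huw1 hm1.1) (huw1 hn1)]⟩
    · exact ⟨hn2, by
        rw [hfib, hm2.2, add_assoc, hG.cocyc hw2 (huw2 hx2) (huw2 hm2.1) (huw2 hn2)]⟩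
  · apply Set.eq_univ_of_forall
    intro m
    obtain ⟨w, hw, hm⟩ := hG.exists_mem m.pt
    exact ⟨basV Φ W w m.pt m.fib,
      ⟨w, m.pt, m.fib, ⟨hG.1 w hw, ⟨w, hw, subset_rfl⟩, hm⟩, rfl⟩, hG.mem_basV_self m hm⟩

lemma isOpen_basV {u : Set X} {x : X} {t : A} (hu : IsOpen u) (hw : ∃ w ∈ W, u ⊆ w)
    (hx : x ∈ u) : IsOpen (basV Φ W u x t) :=
  hG.isBasis.isOpen ⟨u, x, t, ⟨hu, hw, hx⟩, rfl⟩

lemma open_of {S : Set (Cov Φ W)}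
    (h : ∀ m ∈ S, ∃ u, IsOpen u ∧ (∃ w ∈ W, u ⊆ w) ∧ m.pt ∈ u ∧
      basV Φ W u m.pt m.fib ⊆ S) : IsOpen S := by
  rw [hG.isBasis.isOpen_iff]
  intro m hm
  obtain ⟨u, hu, hw, hmu, hsub⟩ := h m hm
  exact ⟨basV Φ W u m.pt m.fib, ⟨u, m.pt, m.fib, ⟨hu, hw, hmu⟩, rfl⟩,
    hG.mem_basV_self m hmu, hsub⟩

lemma continuous_pt : Continuous (Cov.pt : Cov Φ W → X) := by
  rw [continuous_def]
  intro o ho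
  apply hG.open_of
  intro m hm
  obtain ⟨w, hw, hmw⟩ := hG.exists_mem m.pt
  exact ⟨w ∩ o, (hG.1 w hw).inter ho, ⟨w, hw, Set.inter_subset_left⟩, ⟨hmw, hm⟩,
    fun n hn => hn.1.2⟩

lemma continuous_deck (d : A) :
    Continuous (fun m : Cov Φ W => (Cov.mk m.pt (m.fib + d) : Cov Φ W)) := by
  rw [continuous_def]
  intro S hS
  rw [hG.isBasis.isOpen_iff] at hS
  rw [hG.isBasis.isOpen_iff]
  intro m hm
  obtain ⟨s, ⟨u, x, t, hprops, rfl⟩, hmem, hsub⟩ := hS _ hm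
  refine ⟨basV Φ W u x (t - d), ⟨u, x, t - d, hprops, rfl⟩, ⟨hmem.1, ?_⟩, ?_⟩
  · have h1 : m.fib = t + Φ x m.pt - d := eq_sub_of_add_eq hmem.2
    rw [h1]; abel
  · intro n hn
    refine hsub ⟨hn.1, ?_⟩
    show n.fib + d = t + Φ x n.pt
    rw [hn.2]; abel

variable [TopologicalSpace A] [DiscreteTopology A]

/-- Local trivialization of the covering over a member of `W`. -/
def triv {w : Set X} {x : X} (hw : w ∈ W) (hx : x ∈ w) :
    Bundle.Trivialization A (Cov.pt : Cov Φ W → X) where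
  toFun m := (m.pt, m.fib - Φ x m.pt)
  invFun p := ⟨p.1, p.2 + Φ x p.1⟩
  source := Cov.pt ⁻¹' w
  target := w ×ˢ Set.univ
  map_source' m hm := ⟨hm, Set.mem_univ _⟩
  map_target' p hp := hp.1
  left_inv' m _ := Cov.ext' rfl (by show m.fib - Φ x m.pt + Φ x m.pt = m.fib; abel)
  right_inv' p _ := by
    cases p with
    | mk a b =>
      show (a, b + Φ x a - Φ x a) = (a, b)
      have : b + Φ x a - Φ x a = b := by abel
      rw [this]
  open_source := hG.continuous_pt.isOpen_preimage w (hG.1 w hw)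
  open_target := (hG.1 w hw).prod isOpen_univ
  continuousOn_toFun := by
    intro m hm
    obtain ⟨w', hw', hm'⟩ := hG.exists_mem m.pt
    have hmm : m.pt ∈ w ∩ w' := ⟨hm, hm'⟩
    have hU : IsOpen (basV Φ W (w ∩ w') m.pt m.fib) :=
      hG.isOpen_basV ((hG.1 w hw).inter (hG.1 w' hw')) ⟨w, hw, Set.inter_subset_left⟩ hmm
    have hmU : m ∈ basV Φ W (w ∩ w') m.pt m.fib := hG.mem_basV_self m hmm
    have hcont : ContinuousAt (fun n : Cov Φ W => (n.pt, n.fib - Φ x n.pt)) m := by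
      have hg : ContinuousAt (fun n : Cov Φ W => (n.pt, m.fib - Φ x m.pt)) m :=
        (hG.continuous_pt.prodMk continuous_const).continuousAt
      apply hg.congr
      filter_upwards [hU.mem_nhds hmU] with n hn
      rcases hn with ⟨hn1, hfib⟩
      have h5 : n.fib - Φ x n.pt = m.fib - Φ x m.pt := by
        rw [hfib, ← hG.cocyc hw hx hm hn1.1]; abel
      exact congrArg (Prod.mk n.pt) h5.symm
    exact hcont.continuousWithinAt
  continuousOn_invFun := by
    rintro ⟨y, a⟩ hya
    have hyw : y ∈ w := hya.1
    show Filter.Tendsto _ _ _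
    rw [Filter.tendsto_def]
    intro S hS
    obtain ⟨s', ⟨u, x', t, ⟨hu, ⟨w'', hw'', huw''⟩, hx'u⟩, rfl⟩, hgmem, hsub⟩ :=
      hG.isBasis.mem_nhds_iff.mp hS
    apply mem_nhdsWithin_of_mem_nhds
    have hV : IsOpen ((u ∩ w) ×ˢ ({a} : Set A)) :=
      (hu.inter (hG.1 w hw)).prod (isOpen_discrete _)
    apply Filter.mem_of_superset (hV.mem_nhds ⟨⟨hgmem.1, hyw⟩, Set.mem_singleton _⟩)
    rintro ⟨z, b⟩ ⟨⟨hzu, hzw⟩, hb⟩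
    apply hsub
    refine ⟨hzu, ?_⟩
    have h1 : a + Φ x y = t + Φ x' y := hgmem.2
    have h2 : Φ x y + Φ y z = Φ x z := hG.cocyc hw hx hyw hzw
    have h3 : Φ x' y + Φ y z = Φ x' z := hG.cocyc hw'' (huw'' hx'u) (huw'' hgmem.1) (huw'' hzu)
    show b + Φ x z = t + Φ x' z
    rw [show b = a from hb]
    calc a + Φ x z = (a + Φ x y) + Φ y z := by rw [← h2]; abel
    _ = (t + Φ x' y) + Φ y z := by rw [h1]
    _ = t + Φ x' z := by rw [← h3]; abel
  baseSet := w
  open_baseSet := hG.1 w hw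
  source_eq := rfl
  target_eq := rfl
  proj_toFun m _ := rfl

lemma isCoveringMap : IsCoveringMap (Cov.pt : Cov Φ W → X) := by
  choose wsel h1 h2 using hG.exists_mem
  exact IsCoveringMap.mk _ (fun _ => A) (fun x => hG.triv (h1 x) (h2 x)) fun x => h2 x

end Good

end DW


/-! ### Auxiliary: evaluation of the Alexander–Spanier differential in low degrees -/

namespace DW

variable {A : Type*} [AddCommGroup A]

lemma d0_apply {X : Type} (φ : AS.Cochain A X 0) (s : Fin 2 → X) :
    AS.d A X 0 φ s = φ (fun _ => s 1) - φ (fun _ => s 0) := by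
  show ∑ i : Fin 2, ((-1 : ℤ) ^ (i : ℕ)) • φ (s ∘ Fin.succAbove i) = _
  rw [Fin.sum_univ_two]
  have h0 : s ∘ Fin.succAbove (0 : Fin 2) = fun _ => s 1 := by
    funext j; fin_cases j <;> rfl
  have h1 : s ∘ Fin.succAbove (1 : Fin 2) = fun _ => s 0 := by
    funext j; fin_cases j <;> rfl
  rw [h0, h1]
  simp [sub_eq_add_neg]

lemma d1_apply {X : Type} (φ : AS.Cochain A X 1) (s : Fin 3 → X) :
    AS.d A X 1 φ s = φ ![s 1, s 2] - φ ![s 0, s 2] + φ ![s 0, s 1] := by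
  show ∑ i : Fin 3, ((-1 : ℤ) ^ (i : ℕ)) • φ (s ∘ Fin.succAbove i) = _
  rw [Fin.sum_univ_three]
  have h0 : s ∘ Fin.succAbove (0 : Fin 3) = ![s 1, s 2] := by
    funext j; fin_cases j <;> rfl
  have h1 : s ∘ Fin.succAbove (1 : Fin 3) = ![s 0, s 2] := by
    funext j; fin_cases j <;> rfl
  have h2 : s ∘ Fin.succAbove (2 : Fin 3) = ![s 0, s 1] := by
    funext j; fin_cases j <;> rfl
  rw [h0, h1, h2]
  simp [sub_eq_add_neg]

lemma pull1_apply {X Y : Type} (f : X → Y) (φ : AS.Cochain A Y 1) (x y : X) :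
    AS.pull A f 1 φ ![x, y] = φ ![f x, f y] := by
  show φ (f ∘ ![x, y]) = φ ![f x, f y]
  congr 1
  funext j; fin_cases j <;> rfl

lemma pair_eq {X : Type} (s : Fin 2 → X) : s = ![s 0, s 1] := by
  funext j; fin_cases j <;> rfl

/-- Extract a strict local cocycle identity from a cocycle in the AS complex. -/
lemma cocyc_extract {X : Type} [TopologicalSpace X] (φ : AS.Cochain A X 1)
    (h : (QuotientAddGroup.mk φ : AS.QC A X 1) ∈ AS.cocycles A X 1) :
    ∃ U, AS.IsOpenCover U ∧ ∀ u ∈ U, ∀ x ∈ u, ∀ y ∈ u, ∀ z ∈ u,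
      φ ![x, y] + φ ![y, z] = φ ![x, z] := by
  have h' : AS.d A X 1 φ ∈ AS.locZero A X 2 := by
    have h2 : AS.dQ A X 1 (QuotientAddGroup.mk φ) = 0 := h
    rw [AS.dQ, QuotientAddGroup.map_mk] at h2
    exact (QuotientAddGroup.eq_zero_iff _).mp h2
  obtain ⟨U, hU, hloc⟩ := h'
  refine ⟨U, hU, fun u hu x hx y hy z hz => ?_⟩
  have hsm : AS.Small U ![x, y, z] := ⟨u, hu, by intro i; fin_cases i <;> assumption⟩
  have h3 := hloc ![x, y, z] hsm
  rw [d1_apply] at h3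
  have e0 : (![x, y, z] : Fin 3 → X) 0 = x := rfl
  have e1 : (![x, y, z] : Fin 3 → X) 1 = y := rfl
  have e2 : (![x, y, z] : Fin 3 → X) 2 = z := rfl
  rw [e0, e1, e2] at h3
  have h4 : φ ![x, y] + φ ![y, z] - φ ![x, z] = 0 := by rw [← h3]; abel
  exact sub_eq_zero.mp h4

/-- A function which is locally constant w.r.t. a system of neighbourhoods on a
preconnected space is constant. -/
lemma const_of_loc {X B : Type*} [TopologicalSpace X] [PreconnectedSpace X] (F : X → B)
    (h : ∀ x : X, ∃ u, IsOpen u ∧ x ∈ u ∧ ∀ y ∈ u, F y = F x) (x y : X) : F x = F y :=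
  ((IsLocallyConstant.iff_exists_open F).mpr h).apply_eq_of_preconnectedSpace x y

end DW


/-- **Lemma 15** (Dranishnikov–West, corrected version).  Let `p` be a prime and `L` a finite
connected simplicial complex with a simplicial action of a (discrete) group `G`.  Then there
is a regular covering `q : M → L` with deck transformation group `(ℤ/pℤ)^l`, where `l` is the
rank of `H_1(L; ℤ/pℤ)` (equivalently, of `H^1(L; ℤ/pℤ)`, with `ℤ/pℤ` field coefficients),
such that
(1) `q* : H^1(L; ℤ/pℤ) → H^1(M; ℤ/pℤ)` is the zero homomorphism, and
(2) if the fixed point set `L^G` is nonempty and `G` acts trivially on the first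
(co)homology of `L` with `ℤ/pℤ` coefficients, then the `G`-action lifts to an action on `M`
commuting with the deck transformations.
(Cohomology is Alexander–Spanier cohomology, which agrees with Čech and singular cohomology
on the spaces involved; for the field coefficients `ℤ/pℤ`, triviality and rank conditions on
`H_1` are equivalent to the corresponding conditions on `H^1`.) -/
theorem regular_cover_killing_H1 (p : ℕ) (hp : p.Prime)
    (V : Type) [Fintype V] [DecidableEq V] (K : FinSimpComplex V)
    (hne : K.faces.Nonempty) (hconn : ConnectedSpace K.space)
    (G : Type) [Group G] [MulAction G V]
    (hsimp : ∀ g : G, ∀ s ∈ K.faces, s.image (g • ·) ∈ K.faces)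
    (l : ℕ) (hrank : Nonempty (AS.ASH (ZMod p) 1 K.space ≃+ (Fin l → ZMod p))) :
    ∃ (M : Type) (_ : TopologicalSpace M) (q : M → K.space) (hq : Continuous q)
      (δ : (Fin l → ZMod p) → M → M),
      -- `q` is a covering map and `δ` is a free action of `(ℤ/pℤ)^l` by deck
      -- transformations acting transitively on fibres; i.e. `q` is a regular covering
      -- with deck transformation group `(ℤ/pℤ)^l`:
      IsCoveringMap q ∧ Function.Surjective q ∧
      (∀ d, Continuous (δ d)) ∧
      (∀ m, δ 0 m = m) ∧
      (∀ d e m, δ (d + e) m = δ d (δ e m)) ∧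
      (∀ d m, δ d m = m → d = 0) ∧
      (∀ d m, q (δ d m) = q m) ∧
      (∀ m m', q m = q m' → ∃ d, δ d m = m') ∧
      -- (1) the induced homomorphism on `H¹(−; ℤ/pℤ)` is zero:
      AS.ASHmap (ZMod p) hq 1 = 0 ∧
      -- (2) lifting the `G`-action:
      (((∃ x : ↥K.space, ∀ g : G, K.gAct hsimp g x = x) ∧
          (∀ g : G, AS.ASHmap (ZMod p) (K.gAct_continuous hsimp g) 1 =
            AddMonoidHom.id (AS.ASH (ZMod p) 1 ↥K.space))) →
        ∃ ρ : G → M → M, (∀ g, Continuous (ρ g)) ∧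
          (∀ m, ρ 1 m = m) ∧
          (∀ g h m, ρ (g * h) m = ρ g (ρ h m)) ∧
          (∀ g m, q (ρ g m) = K.gAct hsimp g (q m)) ∧
          (∀ g d m, ρ g (δ d m) = δ d (ρ g m))) := by
  classical
  obtain ⟨θ⟩ := hrank
  have hrep : ∀ c : AS.ASH (ZMod p) 1 ↥K.space,
      ∃ ψ : AS.Cochain (ZMod p) ↥K.space 1,
        ∃ hψ : (QuotientAddGroup.mk ψ : AS.QC (ZMod p) ↥K.space 1) ∈
            AS.cocycles (ZMod p) ↥K.space 1,
          (QuotientAddGroup.mk (⟨QuotientAddGroup.mk ψ, hψ⟩ :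
            ↥(AS.cocycles (ZMod p) ↥K.space 1)) : AS.ASH (ZMod p) 1 ↥K.space) = c := by
    intro c
    obtain ⟨z, rfl⟩ := QuotientAddGroup.mk_surjective c
    obtain ⟨zv, hzv⟩ := z
    obtain ⟨ψ, rfl⟩ := QuotientAddGroup.mk_surjective zv
    exact ⟨ψ, hzv, rfl⟩
  choose φf hcoc hcls using fun i : Fin l => hrep (θ.symm (Pi.single i 1))
  choose Ui hUi hUico using fun i : Fin l => DW.cocyc_extract (φf i) (hcoc i)
  obtain ⟨Φ, hΦ⟩ : ∃ Φ : ↥K.space → ↥K.space → (Fin l → ZMod p),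
      ∀ x y i, Φ x y i = φf i ![x, y] := ⟨_, fun _ _ _ => rfl⟩
  obtain ⟨W, hWdef⟩ : ∃ W : Set (Set ↥K.space),
      W = {u | IsOpen u ∧ ∀ i : Fin l, ∃ v ∈ Ui i, u ⊆ v} := ⟨_, rfl⟩
  have hGood : DW.Good Φ W := by
    refine ⟨fun u hu => ?_, ?_, ?_⟩
    · rw [hWdef] at hu; exact hu.1
    · apply Set.eq_univ_of_forall
      intro x
      have hmem : ∀ i : Fin l, ∃ v ∈ Ui i, x ∈ v := fun i =>
        ((hUi i).2.symm ▸ Set.mem_univ x : x ∈ ⋃₀ Ui i)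
      choose vi hvi hxvi using hmem
      refine ⟨⋂ i, vi i, ?_, Set.mem_iInter.mpr hxvi⟩
      rw [hWdef]
      exact ⟨isOpen_iInter_of_finite fun i => (hUi i).1 _ (hvi i),
        fun i => ⟨vi i, hvi i, Set.iInter_subset _ i⟩⟩
    · intro w hw x hx y hy z hz
      rw [hWdef] at hw
      funext i
      obtain ⟨v, hv, hsub⟩ := hw.2 i
      have h5 := hUico i v hv x (hsub hx) y (hsub hy) z (hsub hz)
      show Φ x y i + Φ y z i = Φ x z i
      rw [hΦ, hΦ, hΦ]
      exact h5
  refine ⟨DW.Cov Φ W, inferInstance, DW.Cov.pt, hGood.continuous_pt,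
    fun d m => ⟨m.pt, m.fib + d⟩, hGood.isCoveringMap, fun x => ⟨⟨x, 0⟩, rfl⟩,
    fun d => hGood.continuous_deck d, fun m => DW.Cov.ext' rfl (add_zero _),
    fun d e m => DW.Cov.ext' rfl (by show m.fib + (d + e) = m.fib + e + d; rw [add_comm d e, add_assoc]),
    fun d m h => add_eq_left.mp (congrArg DW.Cov.fib h),
    fun d m => rfl,
    fun m m' h => ⟨m'.fib - m.fib, DW.Cov.ext' h (by show m.fib + (m'.fib - m.fib) = m'.fib; exact add_sub_cancel _ _)⟩,
    ?_, ?_⟩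
  · -- (1) `q*` is zero on first cohomology
    haveI : NeZero p := ⟨hp.ne_zero⟩
    have hA : ∀ cc : Fin l → ZMod p,
        cc = ∑ i : Fin l, (cc i).val • Pi.single i (1 : ZMod p) := by
      intro cc
      funext j
      rw [Finset.sum_apply]
      have h1 : ∀ i : Fin l, ((cc i).val • (Pi.single i (1 : ZMod p) : Fin l → ZMod p)) j
          = if j = i then cc i else 0 := by
        intro i
        rw [Pi.smul_apply, Pi.single_apply]
        split_ifs with h
        · rw [nsmul_eq_mul, mul_one, ZMod.natCast_val, ZMod.cast_id]
        · rw [smul_zero]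
      simp only [h1]
      rw [Finset.sum_ite_eq]
      simp
    have hkill : ∀ i : Fin l,
        (QuotientAddGroup.mk (AS.pull (ZMod p) (DW.Cov.pt : DW.Cov Φ W → ↥K.space) 1 (φf i)) :
          AS.QC (ZMod p) (DW.Cov Φ W) 1) ∈ AS.cobounds (ZMod p) (DW.Cov Φ W) 1 := by
      intro i
      show _ ∈ (AS.dQ (ZMod p) (DW.Cov Φ W) 0).range
      refine ⟨QuotientAddGroup.mk (fun s : Fin 1 → DW.Cov Φ W => (s 0).fib i), ?_⟩
      rw [AS.dQ, QuotientAddGroup.map_mk, QuotientAddGroup.eq]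
      refine ⟨DW.bas Φ W, ⟨fun s hs => hGood.isBasis.isOpen hs, hGood.isBasis.sUnion_eq⟩, ?_⟩
      rintro s ⟨v, ⟨u, x, t, ⟨hu, ⟨w, hw, huw⟩, hxu⟩, rfl⟩, hsv⟩
      have h0 := hsv 0
      have h1 := hsv 1
      show -(AS.d (ZMod p) (DW.Cov Φ W) 0 (fun s : Fin 1 → DW.Cov Φ W => (s 0).fib i) s)
          + AS.pull (ZMod p) DW.Cov.pt 1 (φf i) s = 0
      rw [DW.d0_apply]
      have hpull : AS.pull (ZMod p) (DW.Cov.pt : DW.Cov Φ W → ↥K.space) 1 (φf i) s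
          = φf i ![(s 0).pt, (s 1).pt] := by
        show φf i (DW.Cov.pt ∘ s) = _
        congr 1
        funext j; fin_cases j <;> rfl
      rw [hpull]
      have e0 : (s 0).fib i = t i + Φ x (s 0).pt i := by rw [h0.2]; rfl
      have e1 : (s 1).fib i = t i + Φ x (s 1).pt i := by rw [h1.2]; rfl
      have ec : Φ x (s 0).pt i + Φ (s 0).pt (s 1).pt i = Φ x (s 1).pt i :=
        congrFun (hGood.cocyc hw (huw hxu) (huw h0.1) (huw h1.1)) i
      have hΦval : φf i ![(s 0).pt, (s 1).pt] = Φ (s 0).pt (s 1).pt i := (hΦ _ _ i).symm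
      rw [hΦval]
      show -((s 1).fib i - (s 0).fib i) + Φ (s 0).pt (s 1).pt i = 0
      rw [e0, e1, ← ec]
      abel
    refine AddMonoidHom.ext fun cls => ?_
    rw [AddMonoidHom.zero_apply]
    refine QuotientAddGroup.induction_on cls fun z => ?_
    show (QuotientAddGroup.mk (AS.pullZ (ZMod p) hGood.continuous_pt 1 z) :
      AS.ASH (ZMod p) 1 (DW.Cov Φ W)) = 0
    rw [QuotientAddGroup.eq_zero_iff]
    show AS.pullQ (ZMod p) hGood.continuous_pt 1 z.val
        ∈ AS.cobounds (ZMod p) (DW.Cov Φ W) 1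
    -- decompose the class of `z` in terms of the chosen basis cocycles
    obtain ⟨nn, hnn⟩ : ∃ nn : Fin l → ℕ, ∀ i, nn i = ((θ (QuotientAddGroup.mk z)) i).val :=
      ⟨_, fun _ => rfl⟩
    obtain ⟨zci, hzci⟩ : ∃ zci : Fin l → ↥(AS.cocycles (ZMod p) ↥K.space 1),
        ∀ i, zci i = (⟨QuotientAddGroup.mk (φf i), hcoc i⟩ :
          ↥(AS.cocycles (ZMod p) ↥K.space 1)) := ⟨_, fun _ => rfl⟩
    have hzdec : (QuotientAddGroup.mk z : AS.ASH (ZMod p) 1 ↥K.space)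
        = QuotientAddGroup.mk (∑ i : Fin l, nn i • zci i) := by
      have h2 : (QuotientAddGroup.mk z : AS.ASH (ZMod p) 1 ↥K.space)
          = θ.symm (∑ i : Fin l, nn i • Pi.single i (1 : ZMod p)) := by
        have := hA (θ (QuotientAddGroup.mk z))
        simp only [← hnn] at this
        rw [← this]; exact (θ.symm_apply_apply _).symm
      rw [h2, map_sum]
      have h5 : (QuotientAddGroup.mk (∑ i : Fin l, nn i • zci i) :
          AS.ASH (ZMod p) 1 ↥K.space) = ∑ i : Fin l, nn i •
            (QuotientAddGroup.mk (zci i) : AS.ASH (ZMod p) 1 ↥K.space) := by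
        have h6 := map_sum
          (QuotientAddGroup.mk' ((AS.cobounds (ZMod p) ↥K.space 1).comap
            (AS.cocycles (ZMod p) ↥K.space 1).subtype))
          (fun i => nn i • zci i) Finset.univ
        exact h6.trans (Finset.sum_congr rfl fun i _ => map_nsmul _ _ _)
      rw [h5]
      refine Finset.sum_congr rfl fun i _ => ?_
      rw [map_nsmul, hzci i, hcls i]; rfl
    rw [QuotientAddGroup.eq] at hzdec
    have hbv : ((-z + ∑ i : Fin l, nn i • zci i :
        ↥(AS.cocycles (ZMod p) ↥K.space 1))).val ∈ AS.cobounds (ZMod p) ↥K.space 1 := hzdec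
    have hsumval : ((∑ i : Fin l, nn i • zci i :
        ↥(AS.cocycles (ZMod p) ↥K.space 1))).val
        = ∑ i : Fin l, nn i • (QuotientAddGroup.mk (φf i) : AS.QC (ZMod p) ↥K.space 1) := by
      have h7 := map_sum ((AS.cocycles (ZMod p) ↥K.space 1).subtype)
        (fun i => nn i • zci i) Finset.univ
      have h8 : ∀ i : Fin l, ((AS.cocycles (ZMod p) ↥K.space 1).subtype) (nn i • zci i)
          = nn i • (QuotientAddGroup.mk (φf i) : AS.QC (ZMod p) ↥K.space 1) := by
        intro i
        rw [map_nsmul, hzci i]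
        rfl
      rw [show ((∑ i : Fin l, nn i • zci i : ↥(AS.cocycles (ZMod p) ↥K.space 1))).val
        = ((AS.cocycles (ZMod p) ↥K.space 1).subtype) (∑ i : Fin l, nn i • zci i) from rfl,
        h7]
      exact Finset.sum_congr rfl fun i _ => h8 i
    have hzval : z.val = (∑ i : Fin l, nn i •
        (QuotientAddGroup.mk (φf i) : AS.QC (ZMod p) ↥K.space 1))
        - ((-z + ∑ i : Fin l, nn i • zci i : ↥(AS.cocycles (ZMod p) ↥K.space 1))).val := by
      rw [← hsumval]
      have h9 : ((-z + ∑ i : Fin l, nn i • zci i :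
          ↥(AS.cocycles (ZMod p) ↥K.space 1))).val
          = -(z.val) + ((∑ i : Fin l, nn i • zci i :
            ↥(AS.cocycles (ZMod p) ↥K.space 1))).val := rfl
      rw [h9]
      abel
    rw [hzval, map_sub, map_sum]
    refine AddSubgroup.sub_mem _ (AddSubgroup.sum_mem _ fun i _ => ?_)
      (AS.pullQ_cobounds _ _ _ hbv)
    rw [map_nsmul]
    refine nsmul_mem ?_ _
    rw [AS.pullQ, QuotientAddGroup.map_mk]
    exact hkill i
  · -- (2) lifting the `G`-action
    rintro ⟨⟨x₀, hx₀⟩, htriv⟩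
    haveI : ConnectedSpace ↥K.space := hconn
    have hkey : ∀ (g : G) (i : Fin l), ∃ hc : AS.Cochain (ZMod p) ↥K.space 0,
        ∃ Ug, AS.IsOpenCover Ug ∧ ∀ u ∈ Ug, ∀ y ∈ u, ∀ z ∈ u,
          hc (fun _ => z) - hc (fun _ => y)
            = φf i ![y, z] - φf i ![K.gAct hsimp g y, K.gAct hsimp g z] := by
      intro g i
      have happ := DFunLike.congr_fun (htriv g)
        (QuotientAddGroup.mk (⟨QuotientAddGroup.mk (φf i), hcoc i⟩ :
          ↥(AS.cocycles (ZMod p) ↥K.space 1)))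
      have happ' : (QuotientAddGroup.mk (AS.pullZ (ZMod p) (K.gAct_continuous hsimp g) 1
          (⟨QuotientAddGroup.mk (φf i), hcoc i⟩ : ↥(AS.cocycles (ZMod p) ↥K.space 1))) :
            AS.ASH (ZMod p) 1 ↥K.space)
          = QuotientAddGroup.mk (⟨QuotientAddGroup.mk (φf i), hcoc i⟩ :
            ↥(AS.cocycles (ZMod p) ↥K.space 1)) := happ
      rw [QuotientAddGroup.eq] at happ'
      have hmem : ((-(AS.pullZ (ZMod p) (K.gAct_continuous hsimp g) 1
          (⟨QuotientAddGroup.mk (φf i), hcoc i⟩ : ↥(AS.cocycles (ZMod p) ↥K.space 1)))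
          + (⟨QuotientAddGroup.mk (φf i), hcoc i⟩ :
            ↥(AS.cocycles (ZMod p) ↥K.space 1)))).val
          ∈ (AS.dQ (ZMod p) ↥K.space 0).range := happ'
      obtain ⟨η, hη⟩ := hmem
      obtain ⟨hc, rfl⟩ := QuotientAddGroup.mk_surjective η
      rw [AS.dQ, QuotientAddGroup.map_mk] at hη
      have hη2 : (QuotientAddGroup.mk (AS.d (ZMod p) ↥K.space 0 hc) :
          AS.QC (ZMod p) ↥K.space 1)
          = QuotientAddGroup.mk (-(AS.pull (ZMod p) (K.gAct hsimp g) 1 (φf i)) + φf i) := by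
        rw [hη]; rfl
      rw [QuotientAddGroup.eq] at hη2
      obtain ⟨U, hU, hloc⟩ := hη2
      refine ⟨hc, U, hU, fun u hu y hy z hz => ?_⟩
      have h3 := hloc ![y, z] ⟨u, hu, by intro j; fin_cases j <;> assumption⟩
      have h4 : -(AS.d (ZMod p) ↥K.space 0 hc ![y, z])
          + (-(AS.pull (ZMod p) (K.gAct hsimp g) 1 (φf i) ![y, z]) + φf i ![y, z]) = 0 := h3
      rw [DW.d0_apply, DW.pull1_apply] at h4
      have h5 : -(hc (fun _ => z) - hc (fun _ => y))
          + (-(φf i ![K.gAct hsimp g y, K.gAct hsimp g z]) + φf i ![y, z]) = 0 := h4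
      have h5' : -(-(hc (fun _ => z) - hc (fun _ => y))
          + (-(φf i ![K.gAct hsimp g y, K.gAct hsimp g z]) + φf i ![y, z])) = 0 := by
        rw [h5, neg_zero]
      have h6 : hc (fun _ => z) - hc (fun _ => y)
          - (φf i ![y, z] - φf i ![K.gAct hsimp g y, K.gAct hsimp g z]) = 0 := by
        rw [← h5']; abel
      exact sub_eq_zero.mp h6
    choose hcf Ug hUgcov hUgloc using hkey
    obtain ⟨HH, hHH⟩ : ∃ HH : G → ↥K.space → (Fin l → ZMod p),
        ∀ g y i, HH g y i = hcf g i (fun _ => x₀) - hcf g i (fun _ => y) :=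
      ⟨_, fun _ _ _ => rfl⟩
    have hHx₀ : ∀ g : G, HH g x₀ = 0 := by
      intro g; funext i
      rw [hHH, sub_self]; rfl
    have hHloc : ∀ (g : G) (y : ↥K.space), ∃ u, IsOpen u ∧ y ∈ u ∧
        ∀ z ∈ u, ∀ z' ∈ u, HH g z' - HH g z
          = Φ (K.gAct hsimp g z) (K.gAct hsimp g z') - Φ z z' := by
      intro g y
      have hmem : ∀ i : Fin l, ∃ v ∈ Ug g i, y ∈ v := fun i =>
        (((hUgcov g i).2).symm ▸ Set.mem_univ y : y ∈ ⋃₀ Ug g i)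
      choose vi hvi hyvi using hmem
      refine ⟨⋂ i, vi i, isOpen_iInter_of_finite fun i => (hUgcov g i).1 _ (hvi i),
        Set.mem_iInter.mpr hyvi, ?_⟩
      intro z hz z' hz'
      funext i
      have h7 := hUgloc g i (vi i) (hvi i) z (Set.mem_iInter.mp hz i) z'
        (Set.mem_iInter.mp hz' i)
      show HH g z' i - HH g z i = Φ (K.gAct hsimp g z) (K.gAct hsimp g z') i - Φ z z' i
      rw [hHH, hHH, hΦ, hΦ]
      have h9 : (hcf g i (fun _ => x₀) - hcf g i (fun _ => z'))
          - (hcf g i (fun _ => x₀) - hcf g i (fun _ => z))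
          = -(hcf g i (fun _ => z') - hcf g i (fun _ => z)) := by abel
      rw [h9, h7]
      abel
    have hconst : ∀ F : ↥K.space → (Fin l → ZMod p),
        (∀ y : ↥K.space, ∃ u, IsOpen u ∧ y ∈ u ∧ ∀ z ∈ u, F z = F y) →
        ∀ y, F y = F x₀ := fun F hF y => DW.const_of_loc F hF y x₀
    have hact_one : ∀ x : ↥K.space, K.gAct hsimp 1 x = x := by
      intro x
      apply Subtype.ext
      funext v
      show x.val ((MulAction.toPerm (1 : G)).symm v) = x.val v
      congr 1
      simp [MulAction.toPerm]
    have hact_mul : ∀ (g h : G) (x : ↥K.space),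
        K.gAct hsimp (g * h) x = K.gAct hsimp g (K.gAct hsimp h x) := by
      intro g h x
      apply Subtype.ext
      funext v
      show x.val ((MulAction.toPerm (g * h)).symm v)
        = x.val ((MulAction.toPerm h).symm ((MulAction.toPerm g).symm v))
      congr 1
      simp [MulAction.toPerm, mul_smul]
    have hHone : ∀ y, HH 1 y = 0 := by
      have hF : ∀ y : ↥K.space, ∃ u, IsOpen u ∧ y ∈ u ∧ ∀ z ∈ u, HH 1 z = HH 1 y := by
        intro y
        obtain ⟨u, hu, hyu, hloc⟩ := hHloc 1 y
        refine ⟨u, hu, hyu, fun z hz => ?_⟩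
        have h12 := hloc y hyu z hz
        rw [hact_one, hact_one] at h12
        have h0 : HH 1 z - HH 1 y = 0 := by rw [h12]; exact sub_self _
        exact sub_eq_zero.mp h0
      intro y
      rw [show (0 : Fin l → ZMod p) = HH 1 x₀ from (hHx₀ 1).symm]
      exact hconst _ hF y
    have hHmul : ∀ (g h : G) (y : ↥K.space),
        HH (g * h) y = HH h y + HH g (K.gAct hsimp h y) := by
      intro g h
      obtain ⟨F, hFdef⟩ : ∃ F : ↥K.space → (Fin l → ZMod p),
          ∀ y, F y = HH (g * h) y - HH h y - HH g (K.gAct hsimp h y) := ⟨_, fun _ => rfl⟩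
      have hFx₀ : F x₀ = 0 := by
        rw [hFdef, hx₀ h, hHx₀ (g * h), hHx₀ h, hHx₀ g]
        abel
      have hF : ∀ y : ↥K.space, ∃ u, IsOpen u ∧ y ∈ u ∧ ∀ z ∈ u, F z = F y := by
        intro y
        obtain ⟨u1, hu1, hyu1, hl1⟩ := hHloc (g * h) y
        obtain ⟨u2, hu2, hyu2, hl2⟩ := hHloc h y
        obtain ⟨u3, hu3, hyu3, hl3⟩ := hHloc g (K.gAct hsimp h y)
        refine ⟨u1 ∩ u2 ∩ (K.gAct hsimp h) ⁻¹' u3,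
          (hu1.inter hu2).inter (hu3.preimage (K.gAct_continuous hsimp h)),
          ⟨⟨hyu1, hyu2⟩, hyu3⟩, ?_⟩
        rintro z ⟨⟨hz1, hz2⟩, hz3⟩
        have e1 := hl1 y hyu1 z hz1
        have e2 := hl2 y hyu2 z hz2
        have e3 := hl3 (K.gAct hsimp h y) hyu3 (K.gAct hsimp h z) hz3
        rw [hact_mul g h y, hact_mul g h z] at e1
        have h10 : F z - F y = 0 := by
          rw [hFdef, hFdef]
          have h13 : (HH (g * h) z - HH h z - HH g (K.gAct hsimp h z))
              - (HH (g * h) y - HH h y - HH g (K.gAct hsimp h y))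
              = (HH (g * h) z - HH (g * h) y) - (HH h z - HH h y)
                - (HH g (K.gAct hsimp h z) - HH g (K.gAct hsimp h y)) := by abel
          rw [h13, e1, e2, e3]
          abel
        exact sub_eq_zero.mp h10
      intro y
      have h14 := hconst F hF y
      rw [hFx₀, hFdef] at h14
      have h11 : HH (g * h) y - (HH h y + HH g (K.gAct hsimp h y)) = 0 := by
        rw [← h14]; abel
      exact sub_eq_zero.mp h11
    refine ⟨fun g m => ⟨K.gAct hsimp g m.pt, m.fib + HH g m.pt⟩, ?_, ?_, ?_,
      fun g m => rfl, ?_⟩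
    · intro g
      rw [continuous_def]
      intro S hS
      rw [hGood.isBasis.isOpen_iff] at hS
      apply hGood.open_of
      intro m hm
      obtain ⟨s', ⟨u, x, t, ⟨hu, ⟨w, hw, huw⟩, hxu⟩, rfl⟩, hmem, hsub⟩ := hS _ hm
      obtain ⟨uh, huh, hmuh, hlocu⟩ := hHloc g m.pt
      obtain ⟨w₀, hw₀, hmw₀⟩ := hGood.exists_mem m.pt
      refine ⟨w₀ ∩ (uh ∩ (K.gAct hsimp g) ⁻¹' u),
        (hGood.1 w₀ hw₀).inter (huh.inter (hu.preimage (K.gAct_continuous hsimp g))),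
        ⟨w₀, hw₀, Set.inter_subset_left⟩, ⟨hmw₀, hmuh, hmem.1⟩, ?_⟩
      rintro n ⟨⟨hnw₀, hnuh, hnu⟩, hnfib⟩
      apply hsub
      refine ⟨hnu, ?_⟩
      have e1 := hlocu m.pt hmuh n.pt hnuh
      have e2 : m.fib + HH g m.pt = t + Φ x (K.gAct hsimp g m.pt) := hmem.2
      have e3 : Φ x (K.gAct hsimp g m.pt) + Φ (K.gAct hsimp g m.pt) (K.gAct hsimp g n.pt)
          = Φ x (K.gAct hsimp g n.pt) := hGood.cocyc hw (huw hxu) (huw hmem.1) (huw hnu)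
      show n.fib + HH g n.pt = t + Φ x (K.gAct hsimp g n.pt)
      rw [hnfib]
      have e4 : HH g n.pt = HH g m.pt
          + (Φ (K.gAct hsimp g m.pt) (K.gAct hsimp g n.pt) - Φ m.pt n.pt) := by
        rw [← e1]; abel
      rw [e4]
      rw [show t + Φ x (K.gAct hsimp g n.pt)
          = (m.fib + HH g m.pt) + Φ (K.gAct hsimp g m.pt) (K.gAct hsimp g n.pt) from by
        rw [← e3, ← add_assoc, ← e2]]
      abel
    · intro m
      exact DW.Cov.ext' (hact_one m.pt) (by
        show m.fib + HH 1 m.pt = m.fib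
        rw [hHone]; exact add_zero _)
    · intro g h m
      exact DW.Cov.ext' (hact_mul g h m.pt) (by
        show m.fib + HH (g * h) m.pt = (m.fib + HH h m.pt) + HH g (K.gAct hsimp h m.pt)
        rw [hHmul g h m.pt, add_assoc])
    · intro g d m
      exact DW.Cov.ext' rfl (by
        show (m.fib + d) + HH g m.pt = (m.fib + HH g m.pt) + d
        abel)
end
end

section
/- A compact metric space X has Urysohn n-diameter zero if and only if its covering dimension satisfies dim X ≤ n. -/
open Set Function

open scoped ENNReal

noncomputable section

/-! ### Covering dimension -/

/-- `CovDimLE X n` : every open cover of `X` has an open refinement of order at most `n + 1`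
(i.e. at most `n + 1` members of the refinement have a common point). -/
def CovDimLE (X : Type*) [TopologicalSpace X] (n : ℕ) : Prop :=
  ∀ U : Set (Set X), (∀ u ∈ U, IsOpen u) → ⋃₀ U = univ →
    ∃ V : Set (Set X), (∀ v ∈ V, IsOpen v) ∧ ⋃₀ V = univ ∧
      (∀ v ∈ V, ∃ u ∈ U, v ⊆ u) ∧
      ∀ T : Finset (Set X), ↑T ⊆ V → (⋂₀ (T : Set (Set X))).Nonempty → T.card ≤ n + 1

/-- The (Lebesgue) covering dimension of a topological space, valued in `ℕ∞`. -/
noncomputable def covDim (X : Type*) [TopologicalSpace X] : ℕ∞ :=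
  sInf {e : ℕ∞ | ∃ n : ℕ, e = (n : ℕ∞) ∧ CovDimLE X n}

/-- An `ε`-map is a continuous map whose point inverses all have diameter at most `ε`.
The Urysohn `n`-diameter of `X` is the infimum of all positive `ε` for which there is an
`ε`-map of `X` onto some metric space of covering dimension at most `n`. -/
noncomputable def urysohnDiam (X : Type) [MetricSpace X] (n : ℕ) : ℝ≥0∞ :=
  sInf {ε : ℝ≥0∞ | 0 < ε ∧ ∃ (Y : Type) (_ : MetricSpace Y) (f : X → Y),
    Continuous f ∧ Function.Surjective f ∧ covDim Y ≤ (n : ℕ∞) ∧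
    ∀ y : Y, EMetric.diam (f ⁻¹' {y}) ≤ ε}

/-- Monotonicity of `CovDimLE`. -/
lemma CovDimLE.mono {Y : Type*} [TopologicalSpace Y] {m n : ℕ} (h : m ≤ n)
    (hm : CovDimLE Y m) : CovDimLE Y n := by
  intro U hU hUc
  obtain ⟨V, h1, h2, h3, h4⟩ := hm U hU hUc
  exact ⟨V, h1, h2, h3, fun T hT hne => (h4 T hT hne).trans (by omega)⟩

/-- From `covDim Y ≤ n` deduce `CovDimLE Y n`. -/
lemma covDimLE_of_covDim_le {Y : Type*} [TopologicalSpace Y] {n : ℕ}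
    (h : covDim Y ≤ (n : ℕ∞)) : CovDimLE Y n := by
  by_contra hn
  have hlb : ((n : ℕ∞) + 1) ≤ covDim Y := by
    apply le_sInf
    rintro e ⟨m, rfl, hm⟩
    have hmn : n < m := by
      by_contra hmn
      exact hn (hm.mono (by omega))
    exact_mod_cast Nat.succ_le_of_lt hmn
  have := hlb.trans h
  exact absurd this (by norm_cast; omega)

/-- **Proposition 1** (Dranishnikov–West).  A compact metric space has Urysohn `n`-diameter
zero if and only if its covering dimension is at most `n`. -/
theorem urysohnDiam_eq_zero_iff (X : Type) [MetricSpace X] [CompactSpace X] (n : ℕ) :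
    urysohnDiam X n = 0 ↔ covDim X ≤ (n : ℕ∞) := by
  constructor
  · intro h
    -- It suffices to prove `CovDimLE X n`
    have hX : CovDimLE X n := by
      intro U hUopen hUcov
      -- Lebesgue number
      obtain ⟨δ, hδ, hleb⟩ := lebesgue_number_lemma_of_metric_sUnion
        (isCompact_univ (X := X)) hUopen (by rw [hUcov])
      have hδ' : (0 : ℝ≥0∞) < ENNReal.ofReal δ := by simpa using hδ
      -- get an ε-map with ε < ofReal δ
      have hlt : urysohnDiam X n < ENNReal.ofReal δ := h ▸ hδ'
      rw [urysohnDiam, sInf_lt_iff] at hlt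
      obtain ⟨ε, ⟨hεpos, Y, instY, f, hfc, hfs, hYdim, hfib⟩, hεlt⟩ := hlt
      have hYLE : CovDimLE Y n := covDimLE_of_covDim_le hYdim
      have hclosed : IsClosedMap f := hfc.isClosedMap
      -- for each y, the fiber is inside some element of U
      have hfiber : ∀ y : Y, ∃ u ∈ U, f ⁻¹' {y} ⊆ u := by
        intro y
        obtain ⟨x, hx⟩ := hfs y
        obtain ⟨u, hu, hball⟩ := hleb x (mem_univ x)
        refine ⟨u, hu, fun z hz => hball ?_⟩
        have hz' : edist z x ≤ EMetric.diam (f ⁻¹' {y}) :=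
          EMetric.edist_le_diam_of_mem hz (by simpa [Set.mem_preimage] using hx)
        have : edist z x < ENNReal.ofReal δ := lt_of_le_of_lt (hz'.trans (hfib y)) hεlt
        rw [edist_lt_ofReal] at this
        exact this
      choose u hu hufib using hfiber
      -- saturated open neighbourhoods in Y
      set W : Y → Set Y := fun y => (f '' (u y)ᶜ)ᶜ with hW
      have hWopen : ∀ y, IsOpen (W y) :=
        fun y => (hclosed _ (hUopen _ (hu y)).isClosed_compl).isOpen_compl
      have hWmem : ∀ y, y ∈ W y := by
        intro y hy
        obtain ⟨z, hz, hzy⟩ := hy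
        exact hz (hufib y (by simp [Set.mem_preimage, hzy]))
      have hWpre : ∀ y, f ⁻¹' (W y) ⊆ u y := by
        intro y x hx
        by_contra hxu
        exact hx ⟨x, hxu, rfl⟩
      -- apply covering dimension of Y to the cover {W y}
      obtain ⟨V, hVopen, hVcov, hVref, hVord⟩ := hYLE (range W)
        (by rintro v ⟨y, rfl⟩; exact hWopen y)
        (by
          apply eq_univ_of_forall
          intro y
          exact ⟨W y, mem_range_self y, hWmem y⟩)
      -- pull back to X
      refine ⟨(fun v => f ⁻¹' v) '' V, ?_, ?_, ?_, ?_⟩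
      · rintro w ⟨v, hv, rfl⟩
        exact (hVopen v hv).preimage hfc
      · apply eq_univ_of_forall
        intro x
        have : f x ∈ ⋃₀ V := hVcov ▸ mem_univ _
        obtain ⟨v, hv, hxv⟩ := this
        exact ⟨f ⁻¹' v, ⟨v, hv, rfl⟩, hxv⟩
      · rintro w ⟨v, hv, rfl⟩
        obtain ⟨s, hs, hvs⟩ := hVref v hv
        obtain ⟨y, rfl⟩ := hs
        exact ⟨u y, hu y, (preimage_mono hvs).trans (hWpre y)⟩
      · intro T hT hTne
        classical
        -- choose for each w ∈ T a v ∈ V with w = f ⁻¹' v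
        set g : Set X → Set Y := fun w =>
          if h : ∃ v ∈ V, w = f ⁻¹' v then h.choose else ∅ with hg
        have hgspec : ∀ w ∈ T, g w ∈ V ∧ w = f ⁻¹' (g w) := by
          intro w hw
          obtain ⟨v, hv, rfl⟩ := hT hw
          have hex : ∃ v' ∈ V, f ⁻¹' v = f ⁻¹' v' := ⟨v, hv, rfl⟩
          simp only [hg, dif_pos hex]
          exact ⟨hex.choose_spec.1, hex.choose_spec.2⟩
        have hginj : Set.InjOn g ↑T := by
          intro w1 h1 w2 h2 heq
          rw [(hgspec w1 h1).2, (hgspec w2 h2).2, heq]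
        have hcard : (T.image g).card = T.card := Finset.card_image_of_injOn hginj
        rw [← hcard]
        apply hVord
        · intro v hv
          simp only [Finset.coe_image, Set.mem_image, Finset.mem_coe] at hv
          obtain ⟨w, hw, rfl⟩ := hv
          exact (hgspec w hw).1
        · obtain ⟨x, hx⟩ := hTne
          refine ⟨f x, ?_⟩
          intro s hs
          simp only [Finset.coe_image, Set.mem_image, Finset.mem_coe] at hs
          obtain ⟨w, hw, rfl⟩ := hs
          have : x ∈ w := hx w (by exact_mod_cast hw)
          rw [(hgspec w hw).2] at this
          exact this
    exact sInf_le ⟨n, rfl, hX⟩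
  · intro h
    have hle : ∀ ε : ℝ≥0∞, 0 < ε → urysohnDiam X n ≤ ε := by
      intro ε hε
      apply sInf_le
      refine ⟨hε, X, ‹MetricSpace X›, id, continuous_id, surjective_id, h, ?_⟩
      intro y
      have : (id : X → X) ⁻¹' {y} = {y} := rfl
      rw [this, show EMetric.diam ({y} : Set X) = 0 from EMetric.diam_singleton]
      exact zero_le
    by_contra hne
    have hpos : 0 < urysohnDiam X n := pos_iff_ne_zero.mpr hne
    obtain ⟨ε, hε0, hεlt⟩ := exists_between hpos
    exact absurd (hle ε hε0) (not_le.mpr hεlt)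
end
end

section
/- For metric spaces X and Y, dim(X × Y) ≤ dim X + dim Y. -/
open Set Function

open scoped ENNReal

noncomputable section

namespace DW

open Metric

def cc (j : ℕ) : ℝ := (2⁻¹ : ℝ) ^ j
lemma cc_pos (j : ℕ) : 0 < cc j := pow_pos (by norm_num) j
lemma cc_succ (j : ℕ) : cc (j + 1) = cc j / 2 := by rw [cc, cc, pow_succ]; ring
lemma cc_le_one (j : ℕ) : cc j ≤ 1 := pow_le_one₀ (by norm_num) (by norm_num)
lemma cc_anti {a b : ℕ} (h : a ≤ b) : cc b ≤ cc a :=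
  pow_le_pow_of_le_one (by norm_num) (by norm_num) h
lemma cc_add8 (j : ℕ) : cc (j + 8) = cc j / 256 := by
  rw [cc, cc, pow_add]; norm_num; ring
lemma cc_exists_lt {a : ℝ} (ha : 0 < a) : ∃ j, cc j < a :=
  exists_pow_lt_of_lt_one ha (by norm_num)


section LebN
variable {W : Type*} [MetricSpace W]

/-- Candidate Lebesgue radii at a point. -/
def lebSet (U : Set (Set W)) (w : W) : Set ℝ :=
  {r | r ≤ 1 ∧ (r ≤ 0 ∨ ∃ u ∈ U, ball w r ⊆ u)}

/-- A 1-Lipschitz "local Lebesgue number" function for the cover `U`. -/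
def leb (U : Set (Set W)) (w : W) : ℝ := sSup (lebSet U w)

lemma lebSet_nonempty (U : Set (Set W)) (w : W) : (lebSet U w).Nonempty :=
  ⟨0, by norm_num [lebSet]⟩

lemma lebSet_bddAbove (U : Set (Set W)) (w : W) : BddAbove (lebSet U w) :=
  ⟨1, fun r hr => hr.1⟩

lemma leb_le_one (U : Set (Set W)) (w : W) : leb U w ≤ 1 :=
  csSup_le (lebSet_nonempty U w) fun _ hr => hr.1

lemma leb_nonneg (U : Set (Set W)) (w : W) : 0 ≤ leb U w :=
  le_csSup (lebSet_bddAbove U w) ⟨by norm_num, Or.inl le_rfl⟩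

lemma leb_pos {U : Set (Set W)} (hUo : ∀ u ∈ U, IsOpen u) (hUc : ⋃₀ U = univ) (w : W) :
    0 < leb U w := by
  have hw : w ∈ ⋃₀ U := by rw [hUc]; trivial
  obtain ⟨u, hu, hwu⟩ := hw
  obtain ⟨ε, hε, hball⟩ := Metric.isOpen_iff.1 (hUo u hu) w hwu
  have hmem : min 1 ε ∈ lebSet U w := by
    refine ⟨min_le_left _ _, Or.inr ⟨u, hu, ?_⟩⟩
    exact (ball_subset_ball (min_le_right _ _)).trans hball
  have h2 : min 1 ε ≤ leb U w := le_csSup (lebSet_bddAbove U w) hmem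
  have h0 : (0 : ℝ) < min 1 ε := lt_min one_pos hε
  linarith

lemma leb_spec {U : Set (Set W)} {w : W} {r : ℝ} (hr : 0 < r) (hlt : r < leb U w) :
    ∃ u ∈ U, ball w r ⊆ u := by
  obtain ⟨r', hr', hlt'⟩ := exists_lt_of_lt_csSup (lebSet_nonempty U w) hlt
  rcases hr'.2 with h | ⟨u, hu, hsub⟩
  · linarith
  · exact ⟨u, hu, (ball_subset_ball hlt'.le).trans hsub⟩

lemma leb_le_add (U : Set (Set W)) (w w' : W) : leb U w ≤ leb U w' + dist w w' := by
  refine csSup_le (lebSet_nonempty U w) fun r hr => ?_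
  rcases hr.2 with h | ⟨u, hu, hsub⟩
  · have := leb_nonneg U w'
    have := dist_nonneg (x := w) (y := w')
    linarith
  · by_cases h' : r - dist w w' ≤ 0
    · have := leb_nonneg U w'
      linarith
    · push_neg at h'
      have hmem : r - dist w w' ∈ lebSet U w' := by
        refine ⟨by have := dist_nonneg (x := w) (y := w'); linarith [hr.1], Or.inr ⟨u, hu, ?_⟩⟩
        refine (ball_subset_ball' ?_).trans hsub
        rw [dist_comm]
        linarith
      have h2 : r - dist w w' ≤ leb U w' := le_csSup (lebSet_bddAbove U w') hmem
      linarith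

lemma leb_continuous (U : Set (Set W)) : Continuous (leb U) := by
  have h : LipschitzWith 1 (leb U) := by
    refine LipschitzWith.of_dist_le_mul fun w w' => ?_
    rw [NNReal.coe_one, one_mul, Real.dist_eq, abs_sub_le_iff]
    constructor
    · have := leb_le_add U w w'; linarith
    · have := leb_le_add U w' w; rw [dist_comm] at this; linarith
  exact h.continuous


end LebN

/-- A "good family": `k` disjoint open families of `ε`-small sets refining `Θ`,
such that every point is covered by all but at most `m` of the colors. -/
def GoodFam {X : Type*} [MetricSpace X] (m k : ℕ) (ε : ℝ) (Θ : Set (Set X))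
    (F : Fin k → Set (Set X)) : Prop :=
  (∀ r, ∀ t ∈ F r, IsOpen t) ∧
  (∀ r, ∀ t ∈ F r, ∃ θ ∈ Θ, t ⊆ θ) ∧
  (∀ r, ∀ t ∈ F r, ∃ z, t ⊆ ball z ε) ∧
  (∀ r, ∀ t₁ ∈ F r, ∀ t₂ ∈ F r, t₁ ≠ t₂ → Disjoint t₁ t₂) ∧
  (∀ x, ∃ bad : Finset (Fin k), bad.card ≤ m ∧ ∀ r ∉ bad, ∃ t ∈ F r, x ∈ t)

theorem exists_goodFam {X : Type*} [MetricSpace X] {m : ℕ} (h : CovDimLE X m) (k : ℕ)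
    (Θ : Set (Set X)) (hΘo : ∀ t ∈ Θ, IsOpen t) (hΘc : ⋃₀ Θ = univ) {ε : ℝ} (hε : 0 < ε) :
    ∃ F, GoodFam m k ε Θ F := by
  classical
  set C₀ : Set (Set X) := {s | ∃ θ ∈ Θ, ∃ z : X, s = θ ∩ ball z (ε / 2)} with hC₀
  have hC₀o : ∀ u ∈ C₀, IsOpen u := by
    rintro u ⟨θ, hθ, z, rfl⟩; exact (hΘo θ hθ).inter isOpen_ball
  have hC₀c : ⋃₀ C₀ = univ := by
    apply eq_univ_of_forall; intro x
    have hx : x ∈ ⋃₀ Θ := by rw [hΘc]; trivial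
    obtain ⟨θ, hθ, hxθ⟩ := hx
    exact ⟨θ ∩ ball x (ε / 2), ⟨θ, hθ, x, rfl⟩, hxθ, mem_ball_self (by linarith)⟩
  obtain ⟨V, hVo, hVc, hVref, hVord⟩ := h C₀ hC₀o hC₀c
  set ι := {v : Set X // v ∈ V} with hι
  have hui : ⋃ i : ι, (i : Set X) = univ := by
    rw [← hVc, sUnion_eq_iUnion]
  obtain ⟨v, hvo, hvc, hvlf, hvsub⟩ := precise_refinement (fun i : ι => (i : Set X))
      (fun i => hVo i i.2) hui
  obtain ⟨ρ, hρ⟩ := PartitionOfUnity.exists_isSubordinate (s := univ) isClosed_univ v hvo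
      (by rw [hvc])
  -- every point is in the closure of at most `m+1` of the supports
  have hmemV : ∀ (x : X) (i : ι), ρ i x ≠ 0 → x ∈ (i : Set X) := by
    intro x i hne
    have hxs : x ∈ support (ρ i) := hne
    exact hvsub i (hρ i (subset_tsupport _ hxs))
  have hfin_card : ∀ x : X, (ρ.finsupport x).card ≤ m + 1 := by
    intro x
    have hinj : Set.InjOn (Subtype.val : ι → Set X) (ρ.finsupport x) :=
      Subtype.val_injective.injOn
    set T : Finset (Set X) := (ρ.finsupport x).image Subtype.val with hT
    have hcard : T.card = (ρ.finsupport x).card :=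
      Finset.card_image_of_injective _ Subtype.val_injective
    have hTV : (T : Set (Set X)) ⊆ V := by
      intro t ht
      simp only [hT, Finset.coe_image, mem_image, Finset.mem_coe] at ht
      obtain ⟨i, _, rfl⟩ := ht
      exact i.2
    have hTx : (⋂₀ (T : Set (Set X))).Nonempty := by
      refine ⟨x, ?_⟩
      rw [mem_sInter]
      intro t ht
      simp only [hT, Finset.coe_image, mem_image, Finset.mem_coe] at ht
      obtain ⟨i, hi, rfl⟩ := ht
      exact hmemV x i (by rwa [ρ.mem_finsupport, mem_support] at hi)
    have := hVord T hTV hTx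
    omega
  -- thresholds
  set δ : ℝ := 1 / ((m + 2) * (2 * k + 2)) with hδ
  have hδpos : 0 < δ := by positivity
  have h_t_lt : ∀ r : Fin k, (2 * (r : ℝ) + 2) * δ < 1 / ((m : ℝ) + 2) := by
    intro r
    have hrk : (r : ℝ) + 1 ≤ (k : ℝ) := by exact_mod_cast Nat.succ_le_of_lt r.isLt
    have hkey : ((2 : ℝ) * k + 2) * δ = 1 / ((m : ℝ) + 2) := by
      rw [hδ]
      have h1 : ((m : ℝ) + 2) ≠ 0 := by positivity
      have h2 : ((2 : ℝ) * k + 2) ≠ 0 := by positivity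
      field_simp
    have : (2 * (r : ℝ) + 2) * δ < ((2 : ℝ) * k + 2) * δ := by
      apply mul_lt_mul_of_pos_right _ hδpos
      linarith
    linarith [hkey ▸ this]
  -- the threshold sets
  set thr : Fin k → Finset ι → Set X := fun r S =>
    {x | (∀ i ∈ S, (2 * (r : ℝ) + 2) * δ < ρ i x) ∧
         (∀ i, i ∉ S → ρ i x < (2 * (r : ℝ) + 1) * δ)} with hthr
  have hthro : ∀ r S, IsOpen (thr r S) := by
    intro r S
    rw [isOpen_iff_forall_mem_open]
    intro x hx
    obtain ⟨N, hN, hNfin⟩ := ρ.locallyFinite x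
    refine ⟨interior N ∩ ((⋂ i ∈ S, {y | (2 * (r : ℝ) + 2) * δ < ρ i y}) ∩
      (⋂ i ∈ hNfin.toFinset \ S, {y | ρ i y < (2 * (r : ℝ) + 1) * δ})), ?_, ?_, ?_⟩
    · rintro y ⟨hyN, hyS, hyR⟩
      simp only [mem_iInter] at hyS hyR
      constructor
      · exact fun i hi => hyS i hi
      · intro i hi
        by_cases hiN : i ∈ hNfin.toFinset
        · exact hyR i (Finset.mem_sdiff.2 ⟨hiN, hi⟩)
        · have hsupp : (support (ρ i) ∩ N) = ∅ := by
            by_contra hne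
            exact hiN (hNfin.mem_toFinset.2 (nonempty_iff_ne_empty.2 hne))
          have : ρ i y = 0 := by
            by_contra hne
            have : y ∈ support (ρ i) ∩ N := ⟨hne, interior_subset hyN⟩
            rw [hsupp] at this
            exact this
          rw [this]
          positivity
    · refine (isOpen_interior.inter (IsOpen.inter ?_ ?_))
      · exact isOpen_biInter_finset fun i _ => isOpen_lt continuous_const (ρ i).continuous
      · exact isOpen_biInter_finset fun i _ => isOpen_lt (ρ i).continuous continuous_const
    · refine ⟨mem_interior_iff_mem_nhds.2 hN, ?_, ?_⟩
      · simp only [mem_iInter]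
        exact fun i hi => hx.1 i hi
      · simp only [mem_iInter]
        intro i hi
        exact hx.2 i (Finset.mem_sdiff.1 hi).2
  have hdisj : ∀ (r : Fin k) (S₁ S₂ : Finset ι), S₁ ≠ S₂ → Disjoint (thr r S₁) (thr r S₂) := by
    intro r S₁ S₂ hne
    rw [Set.disjoint_left]
    intro x hx₁ hx₂
    have hex : ∃ i, ¬ (i ∈ S₁ ↔ i ∈ S₂) := by
      by_contra hc
      push_neg at hc
      exact hne (Finset.ext fun i => hc i)
    obtain ⟨i, hi⟩ := hex
    by_cases h1 : i ∈ S₁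
    · have h2 : i ∉ S₂ := fun h => hi ⟨fun _ => h, fun _ => h1⟩
      have ha := hx₁.1 i h1
      have hb := hx₂.2 i h2
      nlinarith [hδpos]
    · have h2 : i ∈ S₂ := by
        by_contra h2
        exact hi ⟨fun h => absurd h h1, fun h => absurd h h2⟩
      have ha := hx₂.1 i h2
      have hb := hx₁.2 i h1
      nlinarith [hδpos]
  -- the family
  refine ⟨fun r => {t | ∃ S : Finset ι, S.Nonempty ∧ t = thr r S}, ?_, ?_, ?_, ?_, ?_⟩
  · rintro r t ⟨S, _, rfl⟩
    exact hthro r S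
  · rintro r t ⟨S, hSne, rfl⟩
    obtain ⟨i₀, hi₀⟩ := hSne
    have hsub : thr r S ⊆ (i₀ : Set X) := by
      intro x hx
      refine hmemV x i₀ ?_
      have := hx.1 i₀ hi₀
      have hpos : 0 < (2 * (r : ℝ) + 2) * δ := by positivity
      intro h0
      rw [h0] at this
      linarith
    obtain ⟨u, hu, hiu⟩ := hVref i₀ i₀.2
    obtain ⟨θ, hθ, z, rfl⟩ := hu
    exact ⟨θ, hθ, hsub.trans (hiu.trans inter_subset_left)⟩
  · rintro r t ⟨S, hSne, rfl⟩
    obtain ⟨i₀, hi₀⟩ := hSne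
    have hsub : thr r S ⊆ (i₀ : Set X) := by
      intro x hx
      refine hmemV x i₀ ?_
      have := hx.1 i₀ hi₀
      have hpos : 0 < (2 * (r : ℝ) + 2) * δ := by positivity
      intro h0
      rw [h0] at this
      linarith
    obtain ⟨u, hu, hiu⟩ := hVref i₀ i₀.2
    obtain ⟨θ, hθ, z, rfl⟩ := hu
    refine ⟨z, hsub.trans ?_⟩
    refine (hiu.trans inter_subset_right).trans (ball_subset_ball (by linarith))
  · rintro r t₁ ⟨S₁, _, rfl⟩ t₂ ⟨S₂, _, rfl⟩ hne
    refine hdisj r S₁ S₂ ?_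
    intro hSS
    exact hne (by rw [hSS])
  · intro x
    have hPsum : ∑ i ∈ ρ.finsupport x, ρ i x = 1 := ρ.sum_finsupport (mem_univ x)
    have hPne : (ρ.finsupport x).Nonempty := by
      rw [Finset.nonempty_iff_ne_empty]
      intro hemp
      rw [hemp, Finset.sum_empty] at hPsum
      norm_num at hPsum
    have hmax : ∃ i₀ ∈ ρ.finsupport x, 1 / ((m : ℝ) + 2) < ρ i₀ x := by
      by_contra hc
      push_neg at hc
      have hle : ∑ i ∈ ρ.finsupport x, ρ i x ≤
          (ρ.finsupport x).card • (1 / ((m : ℝ) + 2)) :=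
        Finset.sum_le_card_nsmul _ _ _ fun i hi => hc i hi
      rw [nsmul_eq_mul] at hle
      have hcard : ((ρ.finsupport x).card : ℝ) ≤ (m : ℝ) + 1 := by
        exact_mod_cast hfin_card x
      have hmpos : (0 : ℝ) < (m : ℝ) + 2 := by positivity
      rw [hPsum] at hle
      have h2 : ((ρ.finsupport x).card : ℝ) * (1 / ((m : ℝ) + 2)) ≤
          ((m : ℝ) + 1) * (1 / ((m : ℝ) + 2)) := by
        apply mul_le_mul_of_nonneg_right hcard
        positivity
      have h3 : (1 : ℝ) ≤ ((m : ℝ) + 1) * (1 / ((m : ℝ) + 2)) := le_trans hle h2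
      rw [mul_one_div, le_div_iff₀ hmpos] at h3
      linarith
    obtain ⟨i₀, hi₀P, hi₀big⟩ := hmax
    set bad : Finset (Fin k) := Finset.univ.filter (fun r : Fin k =>
      ∃ i ∈ (ρ.finsupport x).erase i₀,
        (2 * (r : ℝ) + 1) * δ ≤ ρ i x ∧ ρ i x ≤ (2 * (r : ℝ) + 2) * δ) with hbad
    have hbad_spec : ∀ r ∈ bad, ∃ i ∈ (ρ.finsupport x).erase i₀,
        (2 * (r : ℝ) + 1) * δ ≤ ρ i x ∧ ρ i x ≤ (2 * (r : ℝ) + 2) * δ := by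
      intro r hr
      rw [hbad, Finset.mem_filter] at hr
      exact hr.2
    have hbadcard : bad.card ≤ m := by
      choose wit hwit1 hwit2 hwit3 using hbad_spec
      set f : Fin k → ι := fun r => if h : r ∈ bad then wit r h else i₀ with hf
      have hmaps : ∀ r ∈ bad, f r ∈ (ρ.finsupport x).erase i₀ := by
        intro r hr
        rw [hf]
        simp only [dif_pos hr]
        exact hwit1 r hr
      have hinj : Set.InjOn f bad := by
        intro r₁ hr₁ r₂ hr₂ heq
        simp only [Finset.mem_coe] at hr₁ hr₂
        rw [hf] at heq
        simp only [dif_pos hr₁, dif_pos hr₂] at heq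
        by_contra hne12
        have key : ∀ (a b : Fin k) (ha : a ∈ bad) (hb : b ∈ bad),
            (a : ℕ) < (b : ℕ) → wit a ha = wit b hb → False := by
          intro a b ha hb hab heqw
          have hab' : (a : ℝ) + 1 ≤ (b : ℝ) := by exact_mod_cast Nat.succ_le_of_lt hab
          have h1 := hwit3 a ha
          have h2 := hwit2 b hb
          rw [heqw] at h1
          have : (2 * (a : ℝ) + 2) * δ < (2 * (b : ℝ) + 1) * δ :=
            mul_lt_mul_of_pos_right (by linarith) hδpos
          linarith
        rcases lt_trichotomy (r₁ : ℕ) (r₂ : ℕ) with hlt | heq' | hgt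
        · exact key r₁ r₂ hr₁ hr₂ hlt heq
        · exact hne12 (Fin.ext heq')
        · exact key r₂ r₁ hr₂ hr₁ hgt heq.symm
      have h1 : bad.card ≤ ((ρ.finsupport x).erase i₀).card :=
        Finset.card_le_card_of_injOn f hmaps hinj
      rw [Finset.card_erase_of_mem hi₀P] at h1
      have h2 := hfin_card x
      omega
    refine ⟨bad, hbadcard, ?_⟩
    intro r hr
    set S : Finset ι := (ρ.finsupport x).filter
      (fun i => (2 * (r : ℝ) + 2) * δ < ρ i x) with hS
    have hi₀S : i₀ ∈ S := by
      rw [hS, Finset.mem_filter]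
      refine ⟨hi₀P, lt_trans (h_t_lt r) hi₀big⟩
    refine ⟨thr r S, ⟨S, ⟨i₀, hi₀S⟩, rfl⟩, ?_⟩
    constructor
    · intro i hi
      rw [hS, Finset.mem_filter] at hi
      exact hi.2
    · intro i hi
      by_cases hiP : i ∈ ρ.finsupport x
      · have hityp : ¬ ((2 * (r : ℝ) + 2) * δ < ρ i x) := by
          intro hgt
          exact hi (by rw [hS, Finset.mem_filter]; exact ⟨hiP, hgt⟩)
        push_neg at hityp
        by_contra hge
        push_neg at hge
        have hine : i ≠ i₀ := by
          intro heq
          rw [heq] at hityp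
          linarith [h_t_lt r]
        have : r ∈ bad := by
          rw [hbad, Finset.mem_filter]
          exact ⟨Finset.mem_univ r, i, Finset.mem_erase.2 ⟨hine, hiP⟩, hge, hityp⟩
        exact hr this
      · have : ρ i x = 0 := by
          by_contra hne
          exact hiP ((ρ.mem_finsupport x).2 hne)
        rw [this]
        positivity


/-- Cover by intersections of members from at least `k - m` colors. -/
def interCover {X : Type*} (k : ℕ) (F : Fin k → Set (Set X)) (m : ℕ) : Set (Set X) :=
  {s | ∃ (G : Finset (Fin k)) (sel : Fin k → Set X), k ≤ G.card + m ∧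
       (∀ r ∈ G, sel r ∈ F r) ∧ s = ⋂ r ∈ G, sel r}

lemma interCover_open {X : Type*} [TopologicalSpace X] {m k : ℕ}
    {F : Fin k → Set (Set X)} (ho : ∀ r, ∀ t ∈ F r, IsOpen t) :
    ∀ t ∈ interCover k F m, IsOpen t := by
  rintro t ⟨G, sel, _, hsel, rfl⟩
  exact isOpen_biInter_finset fun r hr => ho r _ (hsel r hr)

lemma interCover_cover {X : Type*} [TopologicalSpace X] {m k : ℕ}
    {F : Fin k → Set (Set X)}
    (hcov : ∀ x, ∃ bad : Finset (Fin k), bad.card ≤ m ∧ ∀ r ∉ bad, ∃ t ∈ F r, x ∈ t) :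
    ⋃₀ interCover k F m = univ := by
  classical
  apply eq_univ_of_forall
  intro x
  obtain ⟨bad, hbadc, hgood⟩ := hcov x
  choose sel hsel hxsel using hgood
  set sel' : Fin k → Set X := fun r => if h : r ∉ bad then sel r h else univ with hsel'
  refine ⟨⋂ r ∈ Finset.univ \ bad, sel' r, ⟨Finset.univ \ bad, sel', ?_, ?_, rfl⟩, ?_⟩
  · have h1 : (Finset.univ \ bad).card = k - bad.card := by
      rw [Finset.card_sdiff_of_subset (Finset.subset_univ _), Finset.card_univ, Fintype.card_fin]
    have h2 : bad.card ≤ k := le_trans (Finset.card_le_card (Finset.subset_univ _))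
      (by rw [Finset.card_univ, Fintype.card_fin])
    omega
  · intro r hr
    have hrb : r ∉ bad := (Finset.mem_sdiff.1 hr).2
    rw [hsel']
    simp only [dif_pos hrb]
    exact hsel r hrb
  · rw [mem_iInter₂]
    intro r hr
    have hrb : r ∉ bad := (Finset.mem_sdiff.1 hr).2
    rw [hsel']
    simp only [dif_pos hrb]
    exact hxsel r hrb

/-- The chained sequence of product covers of order `≤ m + n + 1`. -/
theorem exists_prod_chain {X Y : Type*} [MetricSpace X] [MetricSpace Y] {m n : ℕ}
    (hX : CovDimLE X m) (hY : CovDimLE Y n) (ε : ℕ → ℝ) (hε : ∀ j, 0 < ε j) :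
    ∃ Γ : ℕ → Set (Set (X × Y)),
      (∀ j, ∀ t ∈ Γ j, IsOpen t) ∧
      (∀ j, ⋃₀ Γ j = univ) ∧
      (∀ j, ∀ t ∈ Γ j, ∃ z : X × Y, t ⊆ ball z (ε j)) ∧
      (∀ (j : ℕ) (w : X × Y) (T : Finset (Set (X × Y))),
          (∀ t ∈ T, t ∈ Γ j ∧ w ∈ t) → T.card ≤ m + n + 1) ∧
      (∀ j, ∀ t ∈ Γ (j + 1), ∃ t' ∈ Γ j, t ⊆ t') := by
  classical
  set k := m + n + 1 with hk
  have hbaseX : ∃ F, GoodFam m k (ε 0) {(univ : Set X)} F :=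
    exists_goodFam hX k _ (by rintro t rfl; exact isOpen_univ) (by rw [sUnion_singleton]) (hε 0)
  -- one recursive step on a factor
  have hstepX : ∀ (_ : ℕ) (F : Fin k → Set (Set X)), ∃ F' : ℕ → Fin k → Set (Set X),
      ∀ j' : ℕ, ((∀ r, ∀ t ∈ F r, IsOpen t) ∧
       (∀ x, ∃ bad : Finset (Fin k), bad.card ≤ m ∧ ∀ r ∉ bad, ∃ t ∈ F r, x ∈ t)) →
      GoodFam m k (ε j') (interCover k F m) (F' j') := by
    intro j F
    by_cases hF : (∀ r, ∀ t ∈ F r, IsOpen t) ∧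
       (∀ x, ∃ bad : Finset (Fin k), bad.card ≤ m ∧ ∀ r ∉ bad, ∃ t ∈ F r, x ∈ t)
    · have h' : ∀ j' : ℕ, ∃ F'', GoodFam m k (ε j') (interCover k F m) F'' := fun j' =>
        exists_goodFam hX k (interCover k F m) (interCover_open hF.1)
          (interCover_cover hF.2) (hε j')
      exact ⟨fun j' => (h' j').choose, fun j' _ => (h' j').choose_spec⟩
    · exact ⟨fun _ _ => ∅, fun _ h => absurd h hF⟩
  have hstepY : ∀ (_ : ℕ) (F : Fin k → Set (Set Y)), ∃ F' : ℕ → Fin k → Set (Set Y),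
      ∀ j' : ℕ, ((∀ r, ∀ t ∈ F r, IsOpen t) ∧
       (∀ x, ∃ bad : Finset (Fin k), bad.card ≤ n ∧ ∀ r ∉ bad, ∃ t ∈ F r, x ∈ t)) →
      GoodFam n k (ε j') (interCover k F n) (F' j') := by
    intro j F
    by_cases hF : (∀ r, ∀ t ∈ F r, IsOpen t) ∧
       (∀ x, ∃ bad : Finset (Fin k), bad.card ≤ n ∧ ∀ r ∉ bad, ∃ t ∈ F r, x ∈ t)
    · have h' : ∀ j' : ℕ, ∃ F'', GoodFam n k (ε j') (interCover k F n) F'' := fun j' =>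
        exists_goodFam hY k (interCover k F n) (interCover_open hF.1)
          (interCover_cover hF.2) (hε j')
      exact ⟨fun j' => (h' j').choose, fun j' _ => (h' j').choose_spec⟩
    · exact ⟨fun _ _ => ∅, fun _ h => absurd h hF⟩
  choose stepX hstepX' using hstepX
  choose stepY hstepY' using hstepY
  have hbaseY : ∃ F, GoodFam n k (ε 0) {(univ : Set Y)} F :=
    exists_goodFam hY k _ (by rintro t rfl; exact isOpen_univ) (by rw [sUnion_singleton]) (hε 0)
  set A : ℕ → Fin k → Set (Set X) :=
    fun j => Nat.rec hbaseX.choose (fun j' prev => stepX j' prev (j' + 1)) j with hA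
  set B : ℕ → Fin k → Set (Set Y) :=
    fun j => Nat.rec hbaseY.choose (fun j' prev => stepY j' prev (j' + 1)) j with hB
  have hAsucc : ∀ j, A (j + 1) = stepX j (A j) (j + 1) := fun _ => rfl
  have hBsucc : ∀ j, B (j + 1) = stepY j (B j) (j + 1) := fun _ => rfl
  set ΘX : ℕ → Set (Set X) :=
    fun j => Nat.casesOn j ({univ} : Set (Set X)) (fun j' => interCover k (A j') m) with hΘX
  set ΘY : ℕ → Set (Set Y) :=
    fun j => Nat.casesOn j ({univ} : Set (Set Y)) (fun j' => interCover k (B j') n) with hΘY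
  have hgoodA : ∀ j, GoodFam m k (ε j) (ΘX j) (A j) := by
    intro j
    induction j with
    | zero => exact hbaseX.choose_spec
    | succ j ih =>
      rw [hAsucc]
      exact hstepX' j (A j) (j + 1) ⟨ih.1, ih.2.2.2.2⟩
  have hgoodB : ∀ j, GoodFam n k (ε j) (ΘY j) (B j) := by
    intro j
    induction j with
    | zero => exact hbaseY.choose_spec
    | succ j ih =>
      rw [hBsucc]
      exact hstepY' j (B j) (j + 1) ⟨ih.1, ih.2.2.2.2⟩
  -- the product family
  refine ⟨fun j => {t | ∃ (r : Fin k) (a : Set X) (b : Set Y),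
      a ∈ A j r ∧ b ∈ B j r ∧ t = a ×ˢ b}, ?_, ?_, ?_, ?_, ?_⟩
  · rintro j t ⟨r, a, b, ha, hb, rfl⟩
    exact ((hgoodA j).1 r a ha).prod ((hgoodB j).1 r b hb)
  · intro j
    apply eq_univ_of_forall
    rintro ⟨x, y⟩
    obtain ⟨badX, hbadXc, hgoodX⟩ := (hgoodA j).2.2.2.2 x
    obtain ⟨badY, hbadYc, hgoodY⟩ := (hgoodB j).2.2.2.2 y
    have hcard : (badX ∪ badY).card < k := by
      have h1 := Finset.card_union_le badX badY
      omega
    have hex : ∃ r : Fin k, r ∉ badX ∪ badY := by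
      by_contra hc
      push_neg at hc
      have : (Finset.univ : Finset (Fin k)) ⊆ badX ∪ badY := fun r _ => hc r
      have := Finset.card_le_card this
      rw [Finset.card_univ, Fintype.card_fin] at this
      omega
    obtain ⟨r, hr⟩ := hex
    obtain ⟨a, ha, hxa⟩ := hgoodX r (fun h => hr (Finset.mem_union_left _ h))
    obtain ⟨b, hb, hyb⟩ := hgoodY r (fun h => hr (Finset.mem_union_right _ h))
    exact ⟨a ×ˢ b, ⟨r, a, b, ha, hb, rfl⟩, hxa, hyb⟩
  · rintro j t ⟨r, a, b, ha, hb, rfl⟩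
    obtain ⟨zx, hzx⟩ := (hgoodA j).2.2.1 r a ha
    obtain ⟨zy, hzy⟩ := (hgoodB j).2.2.1 r b hb
    refine ⟨(zx, zy), ?_⟩
    rw [← ball_prod_same]
    exact Set.prod_mono hzx hzy
  · intro j w T hT
    have hK : 0 < k := by omega
    set P : Set (X × Y) → Prop := fun t =>
      ∃ (r : Fin k) (a : Set X) (b : Set Y), a ∈ A j r ∧ b ∈ B j r ∧ t = a ×ˢ b with hP
    set col : Set (X × Y) → Fin k := fun t =>
      if h : P t then h.choose else ⟨0, hK⟩ with hcol
    have hmaps : ∀ t ∈ T, col t ∈ (Finset.univ : Finset (Fin k)) := fun _ _ => Finset.mem_univ _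
    have hinj : Set.InjOn col T := by
      intro t₁ ht₁ t₂ ht₂ heq
      rw [Finset.mem_coe] at ht₁ ht₂
      have h₁ : P t₁ := (hT t₁ ht₁).1
      have h₂ : P t₂ := (hT t₂ ht₂).1
      have hw₁ : w ∈ t₁ := (hT t₁ ht₁).2
      have hw₂ : w ∈ t₂ := (hT t₂ ht₂).2
      rw [hcol] at heq
      simp only [dif_pos h₁, dif_pos h₂] at heq
      obtain ⟨a₁, b₁, ha₁, hb₁, he₁⟩ := h₁.choose_spec
      obtain ⟨a₂, b₂, ha₂, hb₂, he₂⟩ := h₂.choose_spec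
      rw [heq] at ha₁ hb₁
      rw [he₁] at hw₁
      rw [he₂] at hw₂
      have haa : a₁ = a₂ := by
        by_contra hne
        exact Set.disjoint_left.1 ((hgoodA j).2.2.2.1 h₂.choose a₁ ha₁ a₂ ha₂ hne)
          hw₁.1 hw₂.1
      have hbb : b₁ = b₂ := by
        by_contra hne
        exact Set.disjoint_left.1 ((hgoodB j).2.2.2.1 h₂.choose b₁ hb₁ b₂ hb₂ hne)
          hw₁.2 hw₂.2
      rw [he₁, he₂, haa, hbb]
    have := Finset.card_le_card_of_injOn col hmaps hinj
    rw [Finset.card_univ, Fintype.card_fin] at this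
    omega
  · rintro j t ⟨r, a, b, ha, hb, rfl⟩
    obtain ⟨θ₁, hθ₁, haθ⟩ := (hgoodA (j + 1)).2.1 r a ha
    obtain ⟨θ₂, hθ₂, hbθ⟩ := (hgoodB (j + 1)).2.1 r b hb
    obtain ⟨G₁, sel₁, hG₁, hsel₁, rfl⟩ := hθ₁
    obtain ⟨G₂, sel₂, hG₂, hsel₂, rfl⟩ := hθ₂
    have hGcard : 0 < (G₁ ∩ G₂).card := by
      have h1 := Finset.card_inter_add_card_union G₁ G₂
      have h2 : (G₁ ∪ G₂).card ≤ k := by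
        have := Finset.card_le_card (Finset.subset_univ (G₁ ∪ G₂))
        rwa [Finset.card_univ, Fintype.card_fin] at this
      omega
    obtain ⟨r', hr'⟩ := Finset.card_pos.1 hGcard
    have hr'₁ : r' ∈ G₁ := (Finset.mem_inter.1 hr').1
    have hr'₂ : r' ∈ G₂ := (Finset.mem_inter.1 hr').2
    refine ⟨sel₁ r' ×ˢ sel₂ r', ⟨r', sel₁ r', sel₂ r', hsel₁ r' hr'₁, hsel₂ r' hr'₂, rfl⟩, ?_⟩
    refine Set.prod_mono (haθ.trans ?_) (hbθ.trans ?_)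
    · exact Set.biInter_subset_of_mem hr'₁
    · exact Set.biInter_subset_of_mem hr'₂


theorem assembly {W : Type*} [MetricSpace W] (k : ℕ)
    (Γ : ℕ → Set (Set W))
    (hΓo : ∀ j, ∀ t ∈ Γ j, IsOpen t)
    (hΓc : ∀ j, ⋃₀ Γ j = univ)
    (hΓs : ∀ j, ∀ t ∈ Γ j, ∃ z : W, t ⊆ ball z (cc (j + 8)))
    (hΓk : ∀ (j : ℕ) (w : W) (T : Finset (Set W)), (∀ t ∈ T, t ∈ Γ j ∧ w ∈ t) → T.card ≤ k)
    (hΓch : ∀ j, ∀ t ∈ Γ (j + 1), ∃ t' ∈ Γ j, t ⊆ t') :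
    ∀ U : Set (Set W), (∀ u ∈ U, IsOpen u) → ⋃₀ U = univ →
    ∃ V : Set (Set W), (∀ v ∈ V, IsOpen v) ∧ ⋃₀ V = univ ∧
      (∀ v ∈ V, ∃ u ∈ U, v ⊆ u) ∧
      ∀ T : Finset (Set W), ↑T ⊆ V → (⋂₀ (T : Set (Set W))).Nonempty → T.card ≤ k := by
  intro U hUo hUc
  classical
  by_cases hW : Nonempty W
  swap
  · refine ⟨∅, by simp, ?_, by simp, ?_⟩
    · rw [sUnion_empty]
      exact (Set.univ_eq_empty_iff.2 (not_nonempty_iff.1 hW)).symm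
    · intro T hT _
      have hTe : (T : Set (Set W)) = ∅ := subset_empty_iff.1 hT
      have : T = ∅ := Finset.coe_eq_empty.1 hTe
      simp [this]
  have hι : Nonempty {u : Set W // u ∈ U} := by
    obtain ⟨w⟩ := hW
    have hw : w ∈ ⋃₀ U := by rw [hUc]; trivial
    obtain ⟨u, hu, _⟩ := hw
    exact ⟨⟨u, hu⟩⟩
  set f : W → ℝ := leb U with hf
  have fpos : ∀ w, 0 < f w := leb_pos hUo hUc
  have fle1 : ∀ w, f w ≤ 1 := leb_le_one U
  -- zones
  set Zone : ℕ → Set W := fun j => {w | 3 / 4 * cc j ≤ f w} ∩ {w | f w ≤ 2 * cc j} with hZone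
  have hZclosed : ∀ j, IsClosed (Zone j) :=
    fun j => (isClosed_le continuous_const (leb_continuous U)).inter
      (isClosed_le (leb_continuous U) continuous_const)
  set sel : ℕ → Set (Set W) := fun j => {γ | γ ∈ Γ j ∧ (γ ∩ Zone j).Nonempty} with hsel
  -- chain parents
  have hchainE : ∀ (j : ℕ) (γ : Set W), ∃ π : Set W, γ ∈ Γ (j + 1) → (π ∈ Γ j ∧ γ ⊆ π) := by
    intro j γ
    by_cases h : γ ∈ Γ (j + 1)
    · obtain ⟨π, hπ, hsub⟩ := hΓch j γ h
      exact ⟨π, fun _ => ⟨hπ, hsub⟩⟩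
    · exact ⟨∅, fun h' => absurd h' h⟩
  choose πc hπc using hchainE
  -- ball parents
  have hballE : ∀ (j : ℕ) (γ : Set W), ∃ s : {u : Set W // u ∈ U},
      γ ∈ sel j → γ ⊆ (s : Set W) := by
    intro j γ
    by_cases h : γ ∈ sel j
    · obtain ⟨hγΓ, p, hpγ, hpZ⟩ := h
      obtain ⟨z, hz⟩ := hΓs j γ hγΓ
      have h1 : γ ⊆ ball p (2 * cc (j + 8)) := by
        intro y hy
        have h2 := mem_ball.1 (hz hy)
        have h3 := mem_ball.1 (hz hpγ)
        have h4 : dist y p ≤ dist y z + dist p z := dist_triangle_right _ _ _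
        rw [mem_ball]
        linarith
      have h2 : (2 : ℝ) * cc (j + 8) ≤ cc j / 2 := by
        rw [cc_add8]
        have := cc_pos j
        linarith
      have h3 : cc j / 2 < f p := by
        have h4 : 3 / 4 * cc j ≤ f p := hpZ.1
        have := cc_pos j
        linarith
      obtain ⟨u, hu, hsub⟩ := leb_spec (by have := cc_pos j; linarith : (0:ℝ) < cc j / 2) h3
      exact ⟨⟨u, hu⟩, fun _ => (h1.trans ((ball_subset_ball h2).trans hsub))⟩
    · exact ⟨Classical.arbitrary _, fun h' => absurd h' h⟩
  choose bp hbp using hballE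
  -- parent assignment
  set par : ℕ → Set W → {u : Set W // u ∈ U} := fun j => Nat.rec (fun γ => bp 0 γ)
    (fun j' parprev γ => if πc j' γ ∈ sel j' then parprev (πc j' γ) else bp (j' + 1) γ) j
    with hpar
  have hpar0 : ∀ γ, par 0 γ = bp 0 γ := fun _ => rfl
  have hparsucc : ∀ j γ, par (j + 1) γ =
      if πc j γ ∈ sel j then par j (πc j γ) else bp (j + 1) γ := fun _ _ => rfl
  -- the families
  set Htil : ℕ → {u : Set W // u ∈ U} → Set W :=
    fun j s => ⋃₀ {γ | γ ∈ sel j ∧ par j γ = s} with hHtil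
  set Wfam : ℕ → {u : Set W // u ∈ U} → Set W := fun j => Nat.rec (fun s => (s : Set W))
    (fun j' prev s => (prev s \ Zone j') ∪ Htil j' s) j with hWfam
  have hWfam0 : ∀ s, Wfam 0 s = (s : Set W) := fun _ => rfl
  have hWfamsucc : ∀ j s, Wfam (j + 1) s = (Wfam j s \ Zone j) ∪ Htil j s := fun _ _ => rfl
  -- selected sets have f bounded above
  have hself : ∀ (j : ℕ) (γ : Set W), γ ∈ sel j → ∀ w ∈ γ, f w ≤ 2 * cc j + 2 * cc (j + 8) := by
    rintro j γ ⟨hγΓ, p, hpγ, hpZ⟩ w hw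
    obtain ⟨z, hz⟩ := hΓs j γ hγΓ
    have h2 := mem_ball.1 (hz hw)
    have h3 := mem_ball.1 (hz hpγ)
    have h4 : dist w p ≤ dist w z + dist p z := dist_triangle_right _ _ _
    have h5 : f w ≤ f p + dist w p := leb_le_add U w p
    have h6 : f p ≤ 2 * cc j := hpZ.2
    linarith
  -- fresh sets fit in W-fam
  have hWsup : ∀ (j : ℕ) (s : {u : Set W // u ∈ U}) (w : W),
      w ∈ (s : Set W) → (∀ t, t < j → w ∉ Zone t) → w ∈ Wfam j s := by
    intro j
    induction j with
    | zero => intro s w hw _; rw [hWfam0]; exact hw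
    | succ j ih =>
      intro s w hw hz
      rw [hWfamsucc]
      exact Or.inl ⟨ih s w hw (fun t ht => hz t (ht.trans (Nat.lt_succ_self j))),
        hz j (Nat.lt_succ_self j)⟩
  have hHsub : ∀ (j : ℕ) (γ : Set W), γ ∈ sel j → γ ⊆ Htil j (par j γ) := by
    intro j γ hγ
    exact subset_sUnion_of_mem ⟨hγ, rfl⟩
  -- the parent invariant
  have hPAR : ∀ (j : ℕ) (γ : Set W), γ ∈ sel j → γ ⊆ Wfam j (par j γ) := by
    intro j
    induction j with
    | zero =>
      intro γ hγ
      rw [hpar0, hWfam0]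
      exact hbp 0 γ hγ
    | succ j ih =>
      intro γ hγ
      rw [hparsucc]
      by_cases hπ : πc j γ ∈ sel j
      · rw [if_pos hπ]
        have hsubπ : γ ⊆ πc j γ := (hπc j γ hγ.1).2
        refine hsubπ.trans ((hHsub j (πc j γ) hπ).trans ?_)
        rw [hWfamsucc]
        exact subset_union_right
      · rw [if_neg hπ]
        intro w hw
        refine hWsup (j + 1) _ w (hbp (j + 1) γ hγ hw) ?_
        intro t ht hwZ
        rcases Nat.lt_succ_iff_lt_or_eq.1 ht with ht' | rfl
        · -- t < j : f-range contradiction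
          have h1 : f w ≤ 2 * cc (j + 1) + 2 * cc (j + 1 + 8) := hself (j + 1) γ hγ w hw
          have h2 : 3 / 4 * cc t ≤ f w := hwZ.1
          have h3 : cc j ≤ cc (t + 1) := cc_anti ht'
          have h4 : cc (t + 1) = cc t / 2 := cc_succ t
          have h5 : cc (j + 1) = cc j / 2 := cc_succ j
          have h6 : cc (j + 1 + 8) = cc (j + 1) / 256 := cc_add8 (j + 1)
          have := cc_pos (j + 1)
          have := cc_pos t
          linarith
        · -- t = j : the chain parent misses the zone
          have hsubπ : γ ⊆ πc t γ := (hπc t γ hγ.1).2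
          exact hπ ⟨(hπc t γ hγ.1).1, w, hsubπ hw, hwZ⟩
  -- openness
  have hWopen : ∀ (j : ℕ) (s : {u : Set W // u ∈ U}), IsOpen (Wfam j s) := by
    intro j
    induction j with
    | zero => intro s; rw [hWfam0]; exact hUo s s.2
    | succ j ih =>
      intro s
      rw [hWfamsucc]
      refine ((ih s).sdiff (hZclosed j)).union (isOpen_sUnion ?_)
      rintro γ ⟨hγ, _⟩
      exact hΓo j γ hγ.1
  -- inclusion in the cover member
  have hWsub : ∀ (j : ℕ) (s : {u : Set W // u ∈ U}), Wfam j s ⊆ (s : Set W) := by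
    intro j
    induction j with
    | zero => intro s; rw [hWfam0]
    | succ j ih =>
      intro s
      rw [hWfamsucc]
      refine union_subset (diff_subset.trans (ih s)) (sUnion_subset ?_)
      rintro γ ⟨hγ, rfl⟩
      exact (hPAR j γ hγ).trans (ih _)
  -- monotonicity
  have hWmono : ∀ (j : ℕ) (s : {u : Set W // u ∈ U}), Wfam (j + 1) s ⊆ Wfam j s := by
    intro j s
    rw [hWfamsucc]
    refine union_subset diff_subset (sUnion_subset ?_)
    rintro γ ⟨hγ, rfl⟩
    exact hPAR j γ hγ
  have hWmono' : ∀ {j t : ℕ}, j ≤ t → ∀ s, Wfam t s ⊆ Wfam j s := by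
    intro j t h
    induction t, h using Nat.le_induction with
    | base => exact fun s => subset_rfl
    | succ t ht ih => exact fun s => (hWmono t s).trans (ih s)
  -- coverage
  have hWcov : ∀ (j : ℕ) (w : W), ∃ s, w ∈ Wfam j s := by
    intro j
    induction j with
    | zero =>
      intro w
      have hw : w ∈ ⋃₀ U := by rw [hUc]; trivial
      obtain ⟨u, hu, hwu⟩ := hw
      exact ⟨⟨u, hu⟩, by rw [hWfam0]; exact hwu⟩
    | succ j ih =>
      intro w
      by_cases hwZ : w ∈ Zone j
      · have hw : w ∈ ⋃₀ Γ j := by rw [hΓc]; trivial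
        obtain ⟨γ, hγ, hwγ⟩ := hw
        have hγsel : γ ∈ sel j := ⟨hγ, w, hwγ, hwZ⟩
        refine ⟨par j γ, ?_⟩
        rw [hWfamsucc]
        exact Or.inr (hHsub j γ hγsel hwγ)
      · obtain ⟨s, hs⟩ := ih w
        exact ⟨s, by rw [hWfamsucc]; exact Or.inl ⟨hs, hwZ⟩⟩
  -- stability
  have hWstable : ∀ (j : ℕ) (s : {u : Set W // u ∈ U}) (w : W), 3 * cc j < f w →
      (w ∈ Wfam (j + 1) s ↔ w ∈ Wfam j s) := by
    intro j s w hfw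
    have hnZ : w ∉ Zone j := by
      intro hwZ
      have h2 : f w ≤ 2 * cc j := hwZ.2
      have := cc_pos j
      linarith
    have hnsel : ∀ γ ∈ sel j, w ∉ γ := by
      intro γ hγ hwγ
      have h1 := hself j γ hγ w hwγ
      have h2 : cc (j + 8) = cc j / 256 := cc_add8 j
      have := cc_pos j
      linarith
    rw [hWfamsucc]
    constructor
    · rintro (h | h)
      · exact h.1
      · obtain ⟨γ, ⟨hγ, _⟩, hwγ⟩ := h
        exact absurd hwγ (hnsel γ hγ)
    · intro h
      exact Or.inl ⟨h, hnZ⟩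
  have hWstable' : ∀ {j t : ℕ}, j ≤ t → ∀ (s : {u : Set W // u ∈ U}) (w : W),
      3 * cc j < f w → (w ∈ Wfam t s ↔ w ∈ Wfam j s) := by
    intro j t h
    induction t, h using Nat.le_induction with
    | base => exact fun s w _ => Iff.rfl
    | succ t ht ih =>
      intro s w hfw
      have h1 : 3 * cc t < f w := lt_of_le_of_lt (by nlinarith [cc_anti ht, cc_pos t]) hfw
      rw [hWstable t s w h1]
      exact ih s w hfw
  -- stage order
  have hWorder : ∀ (j : ℕ) (w : W), w ∈ Zone j → ∀ s, w ∈ Wfam (j + 1) s →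
      ∃ γ, γ ∈ sel j ∧ par j γ = s ∧ w ∈ γ := by
    intro j w hwZ s hws
    rw [hWfamsucc] at hws
    rcases hws with h | h
    · exact absurd hwZ h.2
    · obtain ⟨γ, ⟨hγ, hpγ⟩, hwγ⟩ := h
      exact ⟨γ, hγ, hpγ, hwγ⟩
  -- every point is in some zone
  have hzone_ex : ∀ w : W, ∃ j, w ∈ Zone j := by
    intro w
    have hSne : ∃ j, 3 / 4 * cc j ≤ f w := by
      obtain ⟨j, hj⟩ := cc_exists_lt (fpos w)
      exact ⟨j, by have := cc_pos j; linarith⟩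
    obtain ⟨j₀, hj₀S, hj₀min⟩ : ∃ j₀, (3 / 4 * cc j₀ ≤ f w) ∧
        ∀ t, t < j₀ → ¬ (3 / 4 * cc t ≤ f w) := by
      obtain ⟨j, hj⟩ := hSne
      have hmem : sInf {j : ℕ | 3 / 4 * cc j ≤ f w} ∈ {j : ℕ | 3 / 4 * cc j ≤ f w} :=
        Nat.sInf_mem ⟨j, hj⟩
      exact ⟨sInf {j : ℕ | 3 / 4 * cc j ≤ f w}, hmem,
        fun t ht => Nat.notMem_of_lt_sInf ht⟩
    refine ⟨j₀, hj₀S, ?_⟩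
    show f w ≤ 2 * cc j₀
    cases j₀ with
    | zero =>
      have h1 := fle1 w
      have h2 : cc 0 = 1 := by simp [cc]
      linarith
    | succ j =>
      have h3 := hj₀min j (Nat.lt_succ_self j)
      push_neg at h3
      have h4 : cc j = 2 * cc (j + 1) := by rw [cc_succ]; ring
      have h5 : f w < 3 / 4 * (2 * cc (j + 1)) := by rw [← h4]; exact h3
      have := cc_pos (j + 1)
      linarith
  -- the limit family
  set O : ℕ → Set W := fun j => {w | 3 * cc j < f w} with hO
  have hOopen : ∀ j, IsOpen (O j) := fun j => isOpen_lt continuous_const (leb_continuous U)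
  set Vinf : {u : Set W // u ∈ U} → Set W := fun s => ⋃ j, (Wfam j s ∩ O j) with hVinf
  refine ⟨{t | ∃ s, t = Vinf s}, ?_, ?_, ?_, ?_⟩
  · rintro t ⟨s, rfl⟩
    exact isOpen_iUnion fun j => (hWopen j s).inter (hOopen j)
  · apply eq_univ_of_forall
    intro w
    obtain ⟨j, hj⟩ := cc_exists_lt (by have := fpos w; linarith : (0 : ℝ) < f w / 3)
    obtain ⟨s, hs⟩ := hWcov j w
    exact ⟨Vinf s, ⟨s, rfl⟩, mem_iUnion.2 ⟨j, hs, by simp only [hO, mem_setOf_eq]; linarith⟩⟩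
  · rintro t ⟨s, rfl⟩
    exact ⟨(s : Set W), s.2, iUnion_subset fun j => inter_subset_left.trans (hWsub j s)⟩
  · intro T hTsub hTne
    obtain ⟨w, hw⟩ := hTne
    rw [mem_sInter] at hw
    obtain ⟨jz, hjz⟩ := hzone_ex w
    have hkey : ∀ t ∈ T, ∃ s, t = Vinf s ∧ w ∈ Wfam (jz + 1) s := by
      intro t ht
      obtain ⟨s, rfl⟩ := hTsub ht
      have hwv : w ∈ Vinf s := hw _ ht
      obtain ⟨j, hj1, hj2⟩ := mem_iUnion.1 hwv
      rcases le_or_gt j (jz + 1) with hle | hlt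
      · refine ⟨s, rfl, ?_⟩
        rw [hWstable' hle s w hj2]
        rwa [hWstable' (le_refl j) s w hj2] at hj1
      · exact ⟨s, rfl, hWmono' (le_of_lt hlt) s hj1⟩
    set sfun : Set W → {u : Set W // u ∈ U} := fun t =>
      if h : ∃ s, t = Vinf s ∧ w ∈ Wfam (jz + 1) s then h.choose else Classical.arbitrary _
      with hsfun
    have hsfun_spec : ∀ t ∈ T, t = Vinf (sfun t) ∧ w ∈ Wfam (jz + 1) (sfun t) := by
      intro t ht
      have h := hkey t ht
      rw [hsfun]
      simp only [dif_pos h]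
      exact h.choose_spec
    set gfun : Set W → Set W := fun t =>
      if h : ∃ γ, γ ∈ sel jz ∧ par jz γ = sfun t ∧ w ∈ γ then h.choose else ∅ with hgfun
    have hgfun_spec : ∀ t ∈ T, gfun t ∈ sel jz ∧ par jz (gfun t) = sfun t ∧ w ∈ gfun t := by
      intro t ht
      have h : ∃ γ, γ ∈ sel jz ∧ par jz γ = sfun t ∧ w ∈ γ :=
        hWorder jz w hjz (sfun t) (hsfun_spec t ht).2
      rw [hgfun]
      simp only [dif_pos h]
      exact h.choose_spec
    have hginj : Set.InjOn gfun T := by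
      intro t₁ ht₁ t₂ ht₂ heq
      rw [Finset.mem_coe] at ht₁ ht₂
      have h₁ := hgfun_spec t₁ ht₁
      have h₂ := hgfun_spec t₂ ht₂
      have hs12 : sfun t₁ = sfun t₂ := by
        rw [← h₁.2.1, ← h₂.2.1, heq]
      have e₁ := (hsfun_spec t₁ ht₁).1
      have e₂ := (hsfun_spec t₂ ht₂).1
      rw [e₁, e₂, hs12]
    have hcard : T.card = (T.image gfun).card := (Finset.card_image_of_injOn hginj).symm
    rw [hcard]
    refine hΓk jz w (T.image gfun) ?_
    intro t' ht'
    obtain ⟨t, ht, rfl⟩ := Finset.mem_image.1 ht'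
    have h := hgfun_spec t ht
    exact ⟨h.1.1, h.2.2⟩


theorem main_lemma {X : Type*} [MetricSpace X] {Y : Type*} [MetricSpace Y] {m n : ℕ}
    (hX : CovDimLE X m) (hY : CovDimLE Y n) : CovDimLE (X × Y) (m + n) := by
  intro U hUo hUc
  obtain ⟨Γ, hΓo, hΓc, hΓs, hΓk, hΓch⟩ := exists_prod_chain hX hY (fun j => cc (j + 8))
    (fun j => cc_pos (j + 8))
  exact assembly (m + n + 1) Γ hΓo hΓc hΓs hΓk hΓch U hUo hUc

end DW

/-- **Corollary 3** (Dranishnikov–West).  For metric spaces `X` and `Y`,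
`dim (X × Y) ≤ dim X + dim Y`. -/
theorem covDim_prod_le (X : Type*) [MetricSpace X] (Y : Type*) [MetricSpace Y] :
    covDim (X × Y) ≤ covDim X + covDim Y := by
  by_cases hX : ∃ m : ℕ, CovDimLE X m
  · by_cases hY : ∃ n : ℕ, CovDimLE Y n
    · obtain ⟨m, hm⟩ := hX
      obtain ⟨n, hn⟩ := hY
      have hXne : {m' : ℕ | CovDimLE X m'}.Nonempty := ⟨m, hm⟩
      have hYne : {n' : ℕ | CovDimLE Y n'}.Nonempty := ⟨n, hn⟩
      set m₀ := sInf {m' : ℕ | CovDimLE X m'} with hm₀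
      set n₀ := sInf {n' : ℕ | CovDimLE Y n'} with hn₀
      have hm₀mem : CovDimLE X m₀ := Nat.sInf_mem hXne
      have hn₀mem : CovDimLE Y n₀ := Nat.sInf_mem hYne
      have key : CovDimLE (X × Y) (m₀ + n₀) := DW.main_lemma hm₀mem hn₀mem
      have h1 : covDim (X × Y) ≤ ((m₀ + n₀ : ℕ) : ℕ∞) :=
        sInf_le ⟨m₀ + n₀, rfl, key⟩
      refine h1.trans ?_
      have hXge : ((m₀ : ℕ) : ℕ∞) ≤ covDim X := by
        refine le_sInf ?_
        rintro e ⟨n', rfl, hn'⟩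
        exact_mod_cast Nat.sInf_le hn'
      have hYge : ((n₀ : ℕ) : ℕ∞) ≤ covDim Y := by
        refine le_sInf ?_
        rintro e ⟨n', rfl, hn'⟩
        exact_mod_cast Nat.sInf_le hn'
      calc ((m₀ + n₀ : ℕ) : ℕ∞) = (m₀ : ℕ∞) + (n₀ : ℕ∞) := by push_cast; ring
        _ ≤ covDim X + covDim Y := add_le_add hXge hYge
    · have : covDim Y = ⊤ := by
        rw [covDim]
        convert sInf_empty
        · rfl
        rw [eq_empty_iff_forall_notMem]
        rintro e ⟨n', rfl, hn'⟩
        exact hY ⟨n', hn'⟩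
      rw [this, add_top]
      exact le_top
  · have : covDim X = ⊤ := by
      rw [covDim]
      convert sInf_empty
      · rfl
      rw [eq_empty_iff_forall_notMem]
      rintro e ⟨n', rfl, hn'⟩
      exact hX ⟨n', hn'⟩
    rw [this, top_add]
    exact le_top
end
end

section
/- If f: X → Y is a continuous surjection of compact metric spaces all of whose point inverses f^{-1}(y) are zero-dimensional, then dim Y ≥ dim X. -/
open Set Function

open scoped ENNReal

noncomputable section

lemma covDim_attained (Z : Type*) [TopologicalSpace Z] (h : covDim Z ≠ ⊤) :
    ∃ n : ℕ, covDim Z = (n : ℕ∞) ∧ CovDimLE Z n := by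
  have hne : {e : ℕ∞ | ∃ n : ℕ, e = (n : ℕ∞) ∧ CovDimLE Z n}.Nonempty := by
    by_contra hc
    rw [Set.not_nonempty_iff_eq_empty] at hc
    exact h (by rw [covDim, hc, sInf_empty])
  obtain ⟨e, m, rfl, hm⟩ := hne
  have hS : {k : ℕ | CovDimLE Z k}.Nonempty := ⟨m, hm⟩
  set n₀ := sInf {k : ℕ | CovDimLE Z k} with hn₀
  have hmem : CovDimLE Z n₀ := Nat.sInf_mem hS
  refine ⟨n₀, le_antisymm (sInf_le ⟨n₀, rfl, hmem⟩) ?_, hmem⟩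
  apply le_sInf
  rintro e ⟨k, rfl, hk⟩
  exact_mod_cast Nat.sInf_le hk

lemma covDimLE_zero_of_covDim_eq_zero (Z : Type*) [TopologicalSpace Z]
    (h : covDim Z = 0) : CovDimLE Z 0 := by
  obtain ⟨n, hn, hle⟩ := covDim_attained Z (by rw [h]; exact ENat.zero_ne_top)
  rw [h] at hn
  have : n = 0 := by exact_mod_cast hn.symm
  rwa [this] at hle

open EMetric in
lemma exists_disjoint_refinement {X : Type*} [MetricSpace X] (K : Set X)
    (hK : IsCompact K) (h0 : CovDimLE K 0) (U : Set (Set X))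
    (hU : ∀ u ∈ U, IsOpen u) (hcov : K ⊆ ⋃₀ U) :
    ∃ D : Finset (Set X), (∀ d ∈ D, IsOpen d) ∧
      (∀ d ∈ D, ∀ d' ∈ D, d ≠ d' → d ∩ d' = ∅) ∧
      K ⊆ ⋃₀ (D : Set (Set X)) ∧ ∀ d ∈ D, ∃ u ∈ U, d ⊆ u := by
  classical
  -- relative cover of the subtype
  set U' : Set (Set K) := {s | ∃ u ∈ U, s = (Subtype.val : K → X) ⁻¹' u} with hU'
  obtain ⟨V, hVopen, hVcov, hVref, hVord⟩ := h0 U'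
    (by rintro _ ⟨u, hu, rfl⟩; exact (hU u hu).preimage continuous_subtype_val)
    (by
      apply eq_univ_of_forall
      rintro ⟨x, hx⟩
      obtain ⟨u, hu, hxu⟩ := hcov hx
      exact ⟨(Subtype.val : K → X) ⁻¹' u, ⟨u, hu, rfl⟩, hxu⟩)
  -- pairwise disjointness in V
  have hVdisj : ∀ v ∈ V, ∀ v' ∈ V, v ≠ v' → v ∩ v' = ∅ := by
    intro v hv v' hv' hne
    by_contra hcon
    obtain ⟨z, hz⟩ := Set.nonempty_iff_ne_empty.2 hcon
    have hT : ((({v, v'} : Finset (Set K)) : Set (Set K))) ⊆ V := by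
      intro s hs
      simp only [Finset.coe_insert, Finset.coe_singleton, mem_insert_iff,
        mem_singleton_iff] at hs
      rcases hs with rfl | rfl
      · exact hv
      · exact hv'
    have hcard := hVord {v, v'} hT ⟨z, by
      simp only [Finset.coe_insert, Finset.coe_singleton, sInter_insert,
        sInter_singleton]
      exact hz⟩
    rw [Finset.card_pair hne] at hcard
    omega
  -- finite subcover
  haveI : CompactSpace K := isCompact_iff_compactSpace.mp hK
  obtain ⟨b, hbV, hbfin, hbcov⟩ :=
    IsCompact.elim_finite_subcover_image (isCompact_univ (X := K))
      (fun v hv => hVopen v hv)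
      (by rw [← sUnion_eq_biUnion, hVcov])
  set t : Finset (Set K) := hbfin.toFinset with ht
  have htV : ∀ v ∈ t, v ∈ V := fun v hv => hbV (hbfin.mem_toFinset.mp hv)
  have htcov : ∀ z : K, ∃ v ∈ t, z ∈ v := by
    intro z
    obtain ⟨v, hv, hzv⟩ := mem_iUnion₂.mp (hbcov (mem_univ z))
    exact ⟨v, hbfin.mem_toFinset.mpr hv, hzv⟩
  -- each member of t is compact (as a clopen subset of the compact K)
  have htcl : ∀ v ∈ t, IsCompact ((Subtype.val : K → X) '' v) := by
    intro v hv
    have hclosed : IsClosed v := by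
      rw [← isOpen_compl_iff]
      have hcompl : vᶜ = ⋃₀ (V \ {v}) := by
        apply Subset.antisymm
        · intro z hz
          have : z ∈ ⋃₀ V := by rw [hVcov]; exact mem_univ z
          obtain ⟨v', hv', hzv'⟩ := this
          have hne : v' ≠ v := fun h => hz (h ▸ hzv')
          exact ⟨v', ⟨hv', hne⟩, hzv'⟩
        · rintro z ⟨v', ⟨hv', hne⟩, hzv'⟩
          intro hzv
          have hz2 : z ∈ v ∩ v' := ⟨hzv, hzv'⟩
          rw [hVdisj v (htV v hv) v' hv' (Ne.symm hne)] at hz2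
          exact hz2
      rw [hcompl]
      exact isOpen_sUnion fun v' hv' => hVopen v' hv'.1
    exact (hclosed.isCompact).image continuous_subtype_val
  -- images in X, pairwise disjoint compact sets
  set Kv : Set K → Set X := fun v => (Subtype.val : K → X) '' v with hKv
  have hKvdisj : ∀ v ∈ t, ∀ v' ∈ t, v ≠ v' → Kv v ∩ Kv v' = ∅ := by
    intro v hv v' hv' hne
    rw [hKv]
    simp only
    rw [← Set.image_inter Subtype.val_injective, hVdisj v (htV v hv) v' (htV v' hv') hne,
      Set.image_empty]
  -- choose a member of U containing each piece
  have huOf : ∀ v ∈ t, ∃ u ∈ U, Kv v ⊆ u := by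
    intro v hv
    obtain ⟨s, hs, hvs⟩ := hVref v (htV v hv)
    obtain ⟨u, hu, rfl⟩ := hs
    exact ⟨u, hu, by rintro _ ⟨z, hz, rfl⟩; exact hvs hz⟩
  choose! uOf huOfU huOfsub using huOf
  -- the separating open sets
  set F : Set K → Set X := fun v => ⋃ v' ∈ t.erase v, Kv v' with hF
  have hFclosed : ∀ v, IsClosed (F v) := by
    intro v
    apply Set.Finite.isClosed_biUnion (Finset.finite_toSet _)
    intro v' hv'
    exact (htcl v' (Finset.mem_of_mem_erase hv')).isClosed
  set D : Set K → Set X :=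
    fun v => uOf v ∩ {x | infEdist x (Kv v) < infEdist x (F v)} with hD
  have hDopen : ∀ v ∈ t, IsOpen (D v) := by
    intro v hv
    exact (hU _ (huOfU v hv)).inter
      (isOpen_lt continuous_infEdist continuous_infEdist)
  have hDdisj : ∀ v ∈ t, ∀ v' ∈ t, v ≠ v' → D v ∩ D v' = ∅ := by
    intro v hv v' hv' hne
    ext x
    simp only [mem_inter_iff, mem_empty_iff_false, iff_false, not_and]
    rintro ⟨-, h1⟩ ⟨-, h2⟩
    have hsub1 : Kv v' ⊆ F v :=
      subset_biUnion_of_mem (Finset.mem_erase.mpr ⟨Ne.symm hne, hv'⟩)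
    have hsub2 : Kv v ⊆ F v' :=
      subset_biUnion_of_mem (Finset.mem_erase.mpr ⟨hne, hv⟩)
    have hlt : infEdist x (Kv v) < infEdist x (Kv v) :=
      calc infEdist x (Kv v) < infEdist x (F v) := h1
        _ ≤ infEdist x (Kv v') := infEdist_anti hsub1
        _ < infEdist x (F v') := h2
        _ ≤ infEdist x (Kv v) := infEdist_anti hsub2
    exact absurd hlt (lt_irrefl _)
  have hDmem : ∀ (x : X) (hx : x ∈ K) (v : Set K), v ∈ t → (⟨x, hx⟩ : K) ∈ v → x ∈ D v := by
    intro x hx v hv hxv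
    refine ⟨huOfsub v hv ⟨⟨x, hx⟩, hxv, rfl⟩, ?_⟩
    have h1 : infEdist x (Kv v) = 0 := infEdist_zero_of_mem ⟨⟨x, hx⟩, hxv, rfl⟩
    have h2 : x ∉ F v := by
      intro hxF
      obtain ⟨v', hv', hxv'⟩ := mem_iUnion₂.mp hxF
      have := hKvdisj v hv v' (Finset.mem_of_mem_erase hv')
        (Ne.symm (Finset.ne_of_mem_erase hv'))
      have hx2 : x ∈ Kv v ∩ Kv v' := ⟨⟨⟨x, hx⟩, hxv, rfl⟩, hxv'⟩
      rw [this] at hx2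
      exact hx2
    have h3 : 0 < infEdist x (F v) := by
      exact infEdist_pos_iff_notMem_closure.mpr (by rw [(hFclosed v).closure_eq]; exact h2)
    simpa [h1] using h3
  refine ⟨t.image D, ?_, ?_, ?_, ?_⟩
  · intro d hd
    obtain ⟨v, hv, rfl⟩ := Finset.mem_image.mp hd
    exact hDopen v hv
  · intro d hd d' hd' hne
    obtain ⟨v, hv, rfl⟩ := Finset.mem_image.mp hd
    obtain ⟨v', hv', rfl⟩ := Finset.mem_image.mp hd'
    exact hDdisj v hv v' hv' (fun h => hne (by rw [h]))
  · intro x hx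
    obtain ⟨v, hv, hxv⟩ := htcov ⟨x, hx⟩
    exact ⟨D v, Finset.mem_coe.mpr (Finset.mem_image_of_mem D hv), hDmem x hx v hv hxv⟩
  · intro d hd
    obtain ⟨v, hv, rfl⟩ := Finset.mem_image.mp hd
    exact ⟨uOf v, huOfU v hv, Set.inter_subset_left⟩

lemma covDimLE_of_zero_dim_fibers {X Y : Type*} [MetricSpace X] [CompactSpace X]
    [MetricSpace Y] (f : X → Y) (hf : Continuous f)
    (hfib : ∀ y : Y, CovDimLE (f ⁻¹' {y} : Set X) 0) [Nonempty Y]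
    (n : ℕ) (hY : CovDimLE Y n) : CovDimLE X n := by
  classical
  intro U hUopen hUcov
  -- for each fiber, get a disjoint open refinement
  have hdsj : ∀ y : Y, ∃ D : Finset (Set X), (∀ d ∈ D, IsOpen d) ∧
      (∀ d ∈ D, ∀ d' ∈ D, d ≠ d' → d ∩ d' = ∅) ∧
      f ⁻¹' {y} ⊆ ⋃₀ (D : Set (Set X)) ∧ ∀ d ∈ D, ∃ u ∈ U, d ⊆ u := by
    intro y
    exact exists_disjoint_refinement (f ⁻¹' {y})
      ((isClosed_singleton.preimage hf).isCompact) (hfib y) U hUopen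
      (by rw [hUcov]; exact subset_univ _)
  choose D hDopen hDdisj hDcov hDref using hdsj
  -- tube neighborhoods
  set G : Y → Set X := fun y => ⋃₀ (D y : Set (Set X)) with hG
  have hGopen : ∀ y, IsOpen (G y) :=
    fun y => isOpen_sUnion fun d hd => hDopen y d hd
  set N : Y → Set Y := fun y => (f '' (G y)ᶜ)ᶜ with hN
  have hNopen : ∀ y, IsOpen (N y) := by
    intro y
    rw [isOpen_compl_iff]
    exact (((hGopen y).isClosed_compl).isCompact.image hf).isClosed
  have hyN : ∀ y, y ∈ N y := by
    intro y
    rintro ⟨x, hx, rfl⟩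
    exact hx (hDcov (f x) rfl)
  have hpre : ∀ y, f ⁻¹' (N y) ⊆ G y := by
    intro y x hx
    by_contra hc
    exact hx ⟨x, hc, rfl⟩
  -- refine the cover {N y} of Y
  obtain ⟨V, hVopen, hVcov, hVref, hVord⟩ := hY (Set.range N)
    (by rintro _ ⟨y, rfl⟩; exact hNopen y)
    (eq_univ_of_forall fun y => ⟨N y, ⟨y, rfl⟩, hyN y⟩)
  set yv : Set Y → Y := fun v => if h : ∃ y, v ⊆ N y then h.choose else Classical.arbitrary Y
    with hyvdef
  have hyv : ∀ v ∈ V, v ⊆ N (yv v) := by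
    intro v hv
    obtain ⟨u, ⟨y, rfl⟩, hvu⟩ := hVref v hv
    have h : ∃ y, v ⊆ N y := ⟨y, hvu⟩
    simp only [hyvdef, dif_pos h]
    exact h.choose_spec
  -- the refinement of X
  set V' : Set (Set X) := {s | ∃ v ∈ V, ∃ d ∈ D (yv v), s = f ⁻¹' v ∩ d} with hV'
  refine ⟨V', ?_, ?_, ?_, ?_⟩
  · rintro s ⟨v, hv, d, hd, rfl⟩
    exact ((hVopen v hv).preimage hf).inter (hDopen _ d hd)
  · apply eq_univ_of_forall
    intro x
    have : f x ∈ ⋃₀ V := by rw [hVcov]; exact mem_univ _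
    obtain ⟨v, hv, hxv⟩ := this
    have hxG : x ∈ G (yv v) := hpre (yv v) (hyv v hv hxv)
    obtain ⟨d, hd, hxd⟩ := hxG
    exact ⟨f ⁻¹' v ∩ d, ⟨v, hv, d, hd, rfl⟩, hxv, hxd⟩
  · rintro s ⟨v, hv, d, hd, rfl⟩
    obtain ⟨u, hu, hdu⟩ := hDref (yv v) d hd
    exact ⟨u, hu, Subset.trans Set.inter_subset_right hdu⟩
  · intro T hTV' hTne
    obtain ⟨x, hx⟩ := hTne
    set φ : Set X → Set Y := fun s =>
      if h : ∃ v ∈ V, ∃ d ∈ D (yv v), s = f ⁻¹' v ∩ d then h.choose else ∅ with hφdef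
    have hφ : ∀ s ∈ T, φ s ∈ V ∧ ∃ d ∈ D (yv (φ s)), s = f ⁻¹' (φ s) ∩ d := by
      intro s hs
      have h : ∃ v ∈ V, ∃ d ∈ D (yv v), s = f ⁻¹' v ∩ d := hTV' hs
      simp only [hφdef, dif_pos h]
      exact ⟨h.choose_spec.1, h.choose_spec.2⟩
    have hinj : Set.InjOn φ (T : Set (Set X)) := by
      intro s₁ hs₁ s₂ hs₂ heq
      obtain ⟨hv₁, d₁, hd₁, hs₁eq⟩ := hφ s₁ hs₁
      obtain ⟨hv₂, d₂, hd₂, hs₂eq⟩ := hφ s₂ hs₂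
      rw [heq] at hs₁eq hd₁
      by_cases hdd : d₁ = d₂
      · rw [hs₁eq, hdd]; exact hs₂eq.symm
      · exfalso
        have hx₁ : x ∈ s₁ := hx s₁ hs₁
        have hx₂ : x ∈ s₂ := hx s₂ hs₂
        have : x ∈ d₁ ∩ d₂ := ⟨(hs₁eq ▸ hx₁).2, (hs₂eq ▸ hx₂).2⟩
        rw [hDdisj (yv (φ s₂)) d₁ hd₁ d₂ hd₂ hdd] at this
        exact this
    have hcard : (T.image φ).card = T.card := Finset.card_image_of_injOn hinj
    have hTV : ((T.image φ : Finset (Set Y)) : Set (Set Y)) ⊆ V := by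
      intro v hv
      obtain ⟨s, hs, rfl⟩ := Finset.mem_image.mp hv
      exact (hφ s hs).1
    have hTne' : (⋂₀ ((T.image φ : Finset (Set Y)) : Set (Set Y))).Nonempty := by
      refine ⟨f x, ?_⟩
      intro v hv
      obtain ⟨s, hs, rfl⟩ := Finset.mem_image.mp hv
      obtain ⟨-, d, -, hseq⟩ := hφ s hs
      exact (hseq ▸ hx s hs).1
    have := hVord (T.image φ) hTV hTne'
    omega

/-- **Corollary 4** (Dranishnikov–West).  If `f : X → Y` is a continuous surjection of
compact metric spaces with zero-dimensional point inverses, then `dim Y ≥ dim X`. -/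
theorem covDim_le_of_zero_dim_fibers (X : Type) [MetricSpace X] [CompactSpace X]
    (Y : Type) [MetricSpace Y] [CompactSpace Y]
    (f : X → Y) (hf : Continuous f) (hsurj : Function.Surjective f)
    (hfib : ∀ y : Y, covDim (f ⁻¹' {y} : Set X) = 0) :
    covDim X ≤ covDim Y := by
  by_cases hX : Nonempty X
  · haveI := hX
    haveI : Nonempty Y := ⟨f (Classical.arbitrary X)⟩
    by_cases hT : covDim Y = ⊤
    · rw [hT]; exact le_top
    · obtain ⟨n, hn, hle⟩ := covDim_attained Y hT
      have hfib' : ∀ y : Y, CovDimLE (f ⁻¹' {y} : Set X) 0 :=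
        fun y => covDimLE_zero_of_covDim_eq_zero _ (hfib y)
      have hX' := covDimLE_of_zero_dim_fibers f hf hfib' n hle
      rw [hn]
      exact sInf_le ⟨n, rfl, hX'⟩
  · have hX' : IsEmpty X := not_nonempty_iff.mp hX
    have h0 : CovDimLE X 0 := by
      intro U hU hcov
      refine ⟨∅, by simp, ?_, by simp, ?_⟩
      · rw [sUnion_empty]
        exact (Set.univ_eq_empty_iff.mpr hX').symm
      · intro T hT hne
        have hTe : T = ∅ := Finset.coe_eq_empty.mp (Set.subset_empty_iff.mp hT)
        rw [hTe]
        simp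
    calc covDim X ≤ 0 := sInf_le ⟨0, rfl, h0⟩
      _ ≤ covDim Y := zero_le
end
end
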